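/- arXiv:1701.07752 — 7 statements merged into one kernel-verified Lean document; each statement's English description precedes it below -/
import Mathlib

section
/- For every integer n ≥ 3 there exists a family F of Hamiltonian paths in the complete graph on the vertex set {1,...,n} with |F| ≥ ⌊n/2⌋!/2^{⌊n/2⌋} such that for any two distinct paths P, Q in F there is a path of 2 edges (on 3 vertices) which is a subpath of one of P, Q and shares no edge with the other. -/
open SimpleGraph

/-- A Hamiltonian path in the complete graph on the vertex set `Fin n` (i.e. `{1,…,n}`):
a walk in `⊤ : SimpleGraph (Fin n)` visiting every vertex exactly once, bundled with its
endpoints. -/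
structure HamPath (n : ℕ) where
  first : Fin n
  last : Fin n
  walk : (⊤ : SimpleGraph (Fin n)).Walk first last
  isHamiltonian : walk.IsHamiltonian

/-- `SepWalks k P Q` : there is a path of `k` edges (on `k+1` vertices) which is entirely
contained (as a subpath, i.e. all of its edges occur) in one of `P`, `Q` and is
edge-disjoint from the other. -/
def SepWalks {n : ℕ} (k : ℕ) {a b c d : Fin n}
    (P : (⊤ : SimpleGraph (Fin n)).Walk a b) (Q : (⊤ : SimpleGraph (Fin n)).Walk c d) :
    Prop :=
  ∃ (x y : Fin n) (w : (⊤ : SimpleGraph (Fin n)).Walk x y),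
    w.IsPath ∧ w.length = k ∧
    (((∀ e ∈ w.edges, e ∈ P.edges) ∧ (∀ e ∈ w.edges, e ∉ Q.edges)) ∨
     ((∀ e ∈ w.edges, e ∈ Q.edges) ∧ (∀ e ∈ w.edges, e ∉ P.edges)))

/-- `Sep k P Q` for bundled Hamiltonian paths. -/
def SepHam {n : ℕ} (k : ℕ) (P Q : HamPath n) : Prop :=
  SepWalks k P.walk Q.walk

/-!
Let `m = ⌊n/2⌋`. Take the permutations `σ` of `Fin n` that fix every even position and preserve
the residue mod 4 of every odd one, and to each associate the Hamiltonian path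
`σ 0, σ 1, …, σ (n-1)`. There are `⌈m/2⌉! ⌊m/2⌋! ≥ m! / 2^m` of them, because
`choose m ⌊m/2⌋ ≤ 2^m`. If `σ ≠ τ`, some vertex `v` sits at odd positions `i < j` of `σ` and `τ`
with `j ≡ i [MOD 4]`. In `σ` the neighbours of `v` are the fixed vertices `i - 1` and `i + 1`,
while in `τ` they are among `j - 1` and `j + 1`; as `j ∉ {i - 2, i, i + 2}`, the 2-path
`i - 1, v, i + 1` of `σ` shares no edge with `τ`.
-/

open Equiv Nat

section WalkOfEquiv

variable {V : Type*} {n : ℕ} [NeZero n]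

theorem List.ofFn_ne_nil_of_neZero (σ : Fin n → V) : List.ofFn σ ≠ [] :=
  mt List.ofFn_eq_nil_iff.1 (NeZero.ne n)

def walkOfEquiv (σ : Fin n ≃ V) :
    (⊤ : SimpleGraph V).Walk ((List.ofFn σ).head (List.ofFn_ne_nil_of_neZero σ))
      ((List.ofFn σ).getLast (List.ofFn_ne_nil_of_neZero σ)) :=
  Walk.ofSupport _ _ ((List.nodup_ofFn.2 σ.injective).isChain.imp fun _ _ h => h)

@[simp]
theorem support_walkOfEquiv (σ : Fin n ≃ V) : (walkOfEquiv σ).support = List.ofFn σ :=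
  Walk.support_ofSupport _ _

theorem isHamiltonian_walkOfEquiv [DecidableEq V] (σ : Fin n ≃ V) :
    (walkOfEquiv σ).IsHamiltonian := by
  have hpath : (walkOfEquiv σ).IsPath := by
    rw [Walk.isPath_def, support_walkOfEquiv]
    exact List.nodup_ofFn.2 σ.injective
  rw [hpath.isHamiltonian_iff]
  intro v
  simpa using ⟨σ.symm v, σ.apply_symm_apply v⟩

theorem mk_mem_edges_walkOfEquiv (σ : Fin n ≃ V) {u v : V} :
    s(u, v) ∈ (walkOfEquiv σ).edges ↔
      (σ.symm u : ℕ) + 1 = σ.symm v ∨ (σ.symm v : ℕ) + 1 = σ.symm u := by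
  rw [Walk.mk_mem_edges_iff_exists]
  have hlen : (walkOfEquiv σ).length = n - 1 := by
    simp [walkOfEquiv]
  have hget : ∀ i (hi : i < n), (walkOfEquiv σ).getVert i = σ ⟨i, hi⟩ := by
    intro i hi
    rw [Walk.getVert_eq_support_getElem _ (by omega)]
    simp
  rw [hlen]
  constructor
  · rintro ⟨i, hi, he⟩
    rw [hget i (by omega), hget (i + 1) (by omega)] at he
    rcases Sym2.eq_iff.1 he with ⟨rfl, rfl⟩ | ⟨rfl, rfl⟩ <;> simp
  · have hnext : ∀ a b : V, (σ.symm a : ℕ) + 1 = σ.symm b →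
        ∀ hb : (σ.symm a : ℕ) + 1 < n, σ ⟨(σ.symm a : ℕ) + 1, hb⟩ = b := fun a b h _ => by
      rw [← σ.apply_symm_apply b]
      exact congrArg σ (Fin.ext h)
    rintro (h | h)
    · refine ⟨σ.symm u, by omega, ?_⟩
      rw [hget _ (by omega), hget _ (by omega), hnext u v h]
      simp
    · refine ⟨σ.symm v, by omega, ?_⟩
      rw [hget _ (by omega), hget _ (by omega), hnext v u h, Sym2.eq_swap]
      simp

end WalkOfEquiv

theorem sepWalks_comm {n k : ℕ} {a b c d : Fin n} (P : (⊤ : SimpleGraph (Fin n)).Walk a b)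
    (Q : (⊤ : SimpleGraph (Fin n)).Walk c d) : SepWalks k P Q ↔ SepWalks k Q P := by
  simp only [SepWalks, or_comm]

theorem sepWalks_two_of_mem_edges {n : ℕ} {a b c d : Fin n}
    {P : (⊤ : SimpleGraph (Fin n)).Walk a b} {Q : (⊤ : SimpleGraph (Fin n)).Walk c d}
    {u v w : Fin n} (huw : u ≠ w) (huvP : s(u, v) ∈ P.edges) (hvwP : s(v, w) ∈ P.edges)
    (huvQ : s(u, v) ∉ Q.edges) (hvwQ : s(v, w) ∉ Q.edges) : SepWalks 2 P Q := by
  have huv : u ≠ v := (P.adj_of_mem_edges huvP).ne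
  have hvw : v ≠ w := (P.adj_of_mem_edges hvwP).ne
  refine ⟨u, w, .cons huv (.cons hvw .nil), ?_, rfl, Or.inl ⟨?_, ?_⟩⟩
  · simp [huv, huw, hvw]
  · simp [huvP, hvwP]
  · simp [huvQ, hvwQ]

namespace HamPath

variable {n : ℕ} [NeZero n]

def ofPerm (σ : Perm (Fin n)) : HamPath n :=
  ⟨_, _, walkOfEquiv σ, isHamiltonian_walkOfEquiv σ⟩

theorem support_ofPerm (σ : Perm (Fin n)) : (ofPerm σ).walk.support = List.ofFn σ :=
  support_walkOfEquiv σ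

theorem mk_mem_edges_ofPerm (σ : Perm (Fin n)) {u v : Fin n} :
    s(u, v) ∈ (ofPerm σ).walk.edges ↔
      (σ.symm u : ℕ) + 1 = σ.symm v ∨ (σ.symm v : ℕ) + 1 = σ.symm u :=
  mk_mem_edges_walkOfEquiv σ

theorem ofPerm_injective : Function.Injective (ofPerm : Perm (Fin n) → HamPath n) := by
  intro σ τ h
  have hsupp := congrArg (fun P : HamPath n => P.walk.support) h
  simp only [support_ofPerm] at hsupp
  exact DFunLike.coe_injective (List.ofFn_injective hsupp)

end HamPath

def parityClass (n : ℕ) (i : Fin n) : Fin n ⊕ Bool :=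
  if (i : ℕ) % 2 = 0 then .inl i else .inr ((i : ℕ) % 4 = 1)

theorem mod_four_eq_of_parityClass_eq {n : ℕ} {i j : Fin n}
    (h : parityClass n i = parityClass n j) :
    (i : ℕ) % 4 = j % 4 ∧ ((i : ℕ) % 2 = 0 → i = j) := by
  unfold parityClass at h
  split_ifs at h with hi hj hj <;> simp only [Sum.inl.injEq, Sum.inr.injEq] at h
  · subst h; simp
  · refine ⟨?_, by omega⟩
    simp only [decide_eq_decide] at h
    omega

theorem apply_eq_self_of_comp_parityClass {n : ℕ} {σ : Perm (Fin n)}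
    (hσ : parityClass n ∘ σ = parityClass n) {i : Fin n} (hi : (i : ℕ) % 2 = 0) : σ i = i := by
  obtain ⟨hmod, heven⟩ := mod_four_eq_of_parityClass_eq (congrFun hσ i)
  exact heven (by omega)

section Separation

variable {n : ℕ} [NeZero n] {σ τ : Perm (Fin n)}

theorem sepHam_ofPerm_of_apply_eq_of_lt (hσ : parityClass n ∘ σ = parityClass n)
    (hτ : parityClass n ∘ τ = parityClass n) {i j : Fin n} (hij : σ i = τ j) (hlt : i < j) :
    SepHam 2 (HamPath.ofPerm σ) (HamPath.ofPerm τ) := by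
  have hclass : parityClass n i = parityClass n j := by
    rw [← congrFun hσ i, ← congrFun hτ j, Function.comp_apply, Function.comp_apply, hij]
  obtain ⟨hmod, heven⟩ := mod_four_eq_of_parityClass_eq hclass
  have hodd : (i : ℕ) % 2 = 1 := by
    by_contra h
    exact hlt.ne (heven (by omega))
  have hlt' : (i : ℕ) < j := hlt
  let u : Fin n := ⟨i - 1, by omega⟩
  let w : Fin n := ⟨i + 1, by omega⟩
  have hfix : ∀ π : Perm (Fin n), parityClass n ∘ π = parityClass n →
      π.symm u = u ∧ π.symm w = w := fun π hπ => by
    simp only [Equiv.symm_apply_eq]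
    exact ⟨(apply_eq_self_of_comp_parityClass hπ (by simp [u]; omega)).symm,
      (apply_eq_self_of_comp_parityClass hπ (by simp [w]; omega)).symm⟩
  have hτi : τ.symm (σ i) = j := by rw [hij, Equiv.symm_apply_apply]
  apply sepWalks_two_of_mem_edges (u := u) (v := σ i) (w := w)
    (Fin.ne_of_val_ne (by simp [u, w]))
  -- `u, σ i, w` sit at positions `i - 1, i, i + 1` in `σ` and `i - 1, j, i + 1` in `τ`
  all_goals
    simp only [HamPath.mk_mem_edges_ofPerm, (hfix σ hσ).1, (hfix σ hσ).2, (hfix τ hτ).1,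
      (hfix τ hτ).2, Equiv.symm_apply_apply, hτi, u, w]
    grind

theorem sepHam_ofPerm_of_ne (hσ : parityClass n ∘ σ = parityClass n)
    (hτ : parityClass n ∘ τ = parityClass n) (hne : σ ≠ τ) :
    SepHam 2 (HamPath.ofPerm σ) (HamPath.ofPerm τ) := by
  obtain ⟨i, hi⟩ : ∃ i, σ i ≠ τ i := by
    by_contra! h
    exact hne (Equiv.ext h)
  have hij : σ i = τ (τ.symm (σ i)) := (τ.apply_symm_apply _).symm
  rcases lt_trichotomy i (τ.symm (σ i)) with h | h | h
  · exact sepHam_ofPerm_of_apply_eq_of_lt hσ hτ hij h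
  · rw [← h] at hij
    exact absurd hij hi
  · exact (sepWalks_comm _ _).1 (sepHam_ofPerm_of_apply_eq_of_lt hτ hσ hij.symm h)

end Separation

theorem Nat.add_factorial_le_two_pow_mul_factorial_mul_factorial (p q : ℕ) :
    (p + q)! ≤ 2 ^ (p + q) * (p ! * q !) := by
  rw [← Nat.add_choose_mul_factorial_mul_factorial p q, mul_assoc]
  exact Nat.mul_le_mul_right _ (Nat.choose_le_two_pow _ _)

theorem Fin.ncard_setOf_odd (n : ℕ) : {i : Fin n | (i : ℕ) % 2 = 1}.ncard = n / 2 := by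
  refine Set.ncard_eq_of_bijective (fun j hj => ⟨2 * j + 1, by omega⟩) ?_ ?_ ?_
  · intro i hi
    simp only [Set.mem_ofPred_eq] at hi
    exact ⟨i / 2, by omega, Fin.ext (by simp only; omega)⟩
  · intro j hj
    simp
  · intro j k hj hk h
    simpa using h

theorem ncard_setOf_parityClass_eq_inl_le_one {n : ℕ} (j : Fin n) :
    {i | parityClass n i = .inl j}.ncard ≤ 1 := by
  refine (Set.ncard_le_ncard (t := {j}) fun i hi => ?_).trans (Set.ncard_singleton j).le
  simp only [parityClass, Set.mem_ofPred_eq] at hi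
  split_ifs at hi
  simpa using hi

theorem factorial_le_two_pow_mul_ncard_stabilizer_parityClass (n : ℕ) :
    (n / 2)! ≤ 2 ^ (n / 2) * {σ : Perm (Fin n) | parityClass n ∘ σ = parityClass n}.ncard := by
  rw [DomMulAct.stabilizer_ncard, Fintype.prod_sum_type, Fintype.prod_bool,
    Finset.prod_eq_one fun j _ => Nat.factorial_eq_one.2 (ncard_setOf_parityClass_eq_inl_le_one j),
    one_mul]
  have hodd : {i | parityClass n i = .inr true}.ncard + {i | parityClass n i = .inr false}.ncard
      = n / 2 := by
    rw [← Set.ncard_union_eq, ← Fin.ncard_setOf_odd]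
    · congr 1
      ext i
      simp only [parityClass, Set.mem_union, Set.mem_ofPred_eq]
      split_ifs <;> simp only [or_self, false_iff, Sum.inr.injEq, decide_eq_true_eq,
        decide_eq_false_iff_not] <;> omega
    · rw [Set.disjoint_left]
      intro i h1 h2
      simp_all
  rw [← hodd]
  exact Nat.add_factorial_le_two_pow_mul_factorial_mul_factorial _ _

/-- **Theorem 1, lower bound.** For every `n ≥ 3` there is a family `F` of Hamiltonian
paths in `K_n` with `|F| ≥ ⌊n/2⌋! / 2 ^ ⌊n/2⌋` such that any two distinct members are
`2`-separated. -/
theorem hamPath_two_separated_lower_bound (n : ℕ) (hn : 3 ≤ n) :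
    ∃ F : Set (HamPath n),
      (∀ P ∈ F, ∀ Q ∈ F, P ≠ Q → SepHam 2 P Q) ∧
      (((n / 2).factorial : ℝ) / 2 ^ (n / 2) ≤ (F.ncard : ℝ)) := by
  have : NeZero n := ⟨by omega⟩
  refine ⟨HamPath.ofPerm '' {σ | parityClass n ∘ σ = parityClass n}, ?_, ?_⟩
  · rintro _ ⟨σ, hσ, rfl⟩ _ ⟨τ, hτ, rfl⟩ hne
    exact sepHam_ofPerm_of_ne hσ hτ (fun h => hne (congrArg _ h))
  · rw [Set.ncard_image_of_injective _ HamPath.ofPerm_injective, div_le_iff₀ (by positivity),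
      mul_comm]
    exact_mod_cast factorial_le_two_pow_mul_ncard_stabilizer_parityClass n
end

section
/- For every integer n ≥ 3, any family F of Hamiltonian paths in the complete graph on the vertex set {1,...,n} such that for any two distinct paths P, Q in F there is a path of 2 edges which is a subpath of one of P, Q and shares no edge with the other, satisfies |F| ≤ 2^{⌈n/2⌉}·⌈n/2⌉!. -/
/-!
Cut a Hamiltonian path `v₀ v₁ … v_{n-1}` into the consecutive pairs `{v₀, v₁}, {v₂, v₃}, …`.
Swapping the two vertices of every pair is an involution of the vertex set with at most one fixed
point, and every 2-edge subpath of the path contains one of the pair edges. So two paths with the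
same involution are not 2-separated, and a 2-separated family injects into the involutions with at
most one fixed point. These all have cycle type `(2, …, 2)` with `k = ⌊n/2⌋` entries, so there are
`n! / ((n - 2k)! 2^k k!)` of them, which is at most `2^(n-k) (n-k)!` because `C(n, k) ≤ 2^n`.
-/

open SimpleGraph

open Finset Nat Equiv

namespace Equiv.Perm

variable {α : Type*} [Fintype α] [DecidableEq α]

theorem cycleType_eq_replicate_two {σ : Perm α} (hσ : σ ^ 2 = 1)
    (hfix : Fintype.card α ≤ #σ.support + 1) :
    σ.cycleType = Multiset.replicate (Fintype.card α / 2) 2 := by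
  have hrep := cycleType_of_pow_prime_eq_one hσ
  have hsum := σ.sum_cycleType
  rw [hrep, Multiset.sum_replicate, smul_eq_mul] at hsum
  have := σ.support.card_le_univ
  rw [hrep]
  congr 1
  omega

theorem card_cycleType_replicate_two_mul_le (k : ℕ) :
    #{σ : Perm α | σ.cycleType = Multiset.replicate k 2} * (2 ^ k * k !) ≤
      (Fintype.card α)! := by
  have hprod : ∏ m ∈ (Multiset.replicate k 2).toFinset,
      (Multiset.count m (Multiset.replicate k 2))! = k ! := by
    rcases eq_or_ne k 0 with rfl | hk
    · simp
    · simp [hk]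
  have h := card_of_cycleType_mul_eq α (Multiset.replicate k 2)
  rw [Multiset.prod_replicate, hprod] at h
  calc _ ≤ #{σ : Perm α | σ.cycleType = Multiset.replicate k 2} *
        ((Fintype.card α - (Multiset.replicate k 2).sum)! * 2 ^ k * k !) := by
        rw [mul_assoc _ (2 ^ k)]
        exact Nat.mul_le_mul_left _ (Nat.le_mul_of_pos_left _ (factorial_pos _))
    _ ≤ _ := by rw [h]; split_ifs <;> simp

theorem card_involutions_le :
    #{σ : Perm α | σ ^ 2 = 1 ∧ Fintype.card α ≤ #σ.support + 1} ≤
      2 ^ ((Fintype.card α + 1) / 2) * ((Fintype.card α + 1) / 2)! := by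
  set n := Fintype.card α
  set k := n / 2
  have hsub : ({σ | σ ^ 2 = 1 ∧ n ≤ #σ.support + 1} : Finset (Perm α)) ⊆
      ({σ | σ.cycleType = Multiset.replicate k 2} : Finset (Perm α)) := by
    intro σ
    simp only [mem_filter, mem_univ, true_and]
    exact fun h => cycleType_eq_replicate_two h.1 h.2
  have hfact : n ! ≤ 2 ^ ((n + 1) / 2) * ((n + 1) / 2)! * (2 ^ k * k !) := by
    have hk : k ≤ n := Nat.div_le_self n 2
    have hnk : (n + 1) / 2 = n - k := by omega
    calc n ! = n.choose k * k ! * (n - k)! := (choose_mul_factorial_mul_factorial hk).symm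
      _ ≤ 2 ^ n * k ! * (n - k)! := by gcongr; exact choose_le_two_pow n k
      _ = _ := by rw [hnk, ← Nat.sub_add_cancel hk, pow_add, Nat.add_sub_cancel]; ring
  refine Nat.le_of_mul_le_mul_right ?_ (by positivity : 0 < 2 ^ k * k !)
  calc _ ≤ #{σ : Perm α | σ.cycleType = Multiset.replicate k 2} * (2 ^ k * k !) :=
        Nat.mul_le_mul_right _ (card_le_card hsub)
    _ ≤ n ! := card_cycleType_replicate_two_mul_le k
    _ ≤ _ := hfact

end Equiv.Perm

/-- The partner of `i` when `0, 1, …, m` are grouped into the pairs `{0, 1}, {2, 3}, …`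
(`m` stays alone when it is even). -/
def pairIndex (m i : ℕ) : ℕ := if i % 2 = 0 then (if i < m then i + 1 else i) else i - 1

section pairIndex

variable {m i : ℕ}

lemma pairIndex_le (hi : i ≤ m) : pairIndex m i ≤ m := by
  unfold pairIndex; split_ifs <;> omega

lemma pairIndex_pairIndex (hi : i ≤ m) : pairIndex m (pairIndex m i) = i := by
  unfold pairIndex; split_ifs <;> omega

lemma eq_of_pairIndex_eq_self (hi : i ≤ m) (h : pairIndex m i = i) : i = m := by
  unfold pairIndex at h; split_ifs at h <;> omega

lemma pairIndex_adjacent (hne : pairIndex m i ≠ i) :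
    pairIndex m i + 1 = i ∨ i + 1 = pairIndex m i := by
  unfold pairIndex at *; split_ifs at * <;> omega

end pairIndex

namespace SimpleGraph.Walk.IsHamiltonian

variable {α : Type*} [DecidableEq α] {G : SimpleGraph α} {a b : α} {p : G.Walk a b}
  (hp : p.IsHamiltonian)

def position (v : α) : ℕ := hp.getVertEquiv.symm v

lemma getVert_position (v : α) : p.getVert (hp.position v) = v :=
  hp.getVertEquiv.apply_symm_apply v

lemma position_le_length (v : α) : hp.position v ≤ p.length := by
  have : hp.position v < p.support.length := (hp.getVertEquiv.symm v).is_lt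
  rw [Walk.length_support] at this
  omega

lemma position_getVert {i : ℕ} (hi : i ≤ p.length) : hp.position (p.getVert i) = i :=
  hp.isPath.getVert_injOn (hp.position_le_length _) hi (hp.getVert_position _)

lemma position_adjacent_of_mk_mem_edges {x y : α} (h : s(x, y) ∈ p.edges) :
    hp.position x + 1 = hp.position y ∨ hp.position y + 1 = hp.position x := by
  obtain ⟨i, hi, hxy⟩ := (mk_mem_edges_iff_exists p).1 h
  rcases Sym2.eq_iff.1 hxy with ⟨rfl, rfl⟩ | ⟨rfl, rfl⟩
  · left; rw [hp.position_getVert hi.le, hp.position_getVert hi]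
  · right; rw [hp.position_getVert hi.le, hp.position_getVert hi]

def partner : Perm α :=
  Function.Involutive.toPerm (fun v => p.getVert (pairIndex p.length (hp.position v))) fun v => by
    simp only [hp.position_getVert (pairIndex_le (hp.position_le_length v)),
      pairIndex_pairIndex (hp.position_le_length v), hp.getVert_position]

lemma partner_apply (v : α) : hp.partner v = p.getVert (pairIndex p.length (hp.position v)) :=
  rfl

lemma position_partner (v : α) :
    hp.position (hp.partner v) = pairIndex p.length (hp.position v) :=
  hp.position_getVert (pairIndex_le (hp.position_le_length v))

lemma partner_sq : hp.partner ^ 2 = 1 := by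
  ext v
  rw [sq, Perm.mul_apply, Perm.one_apply]
  exact Function.Involutive.toPerm_involutive _ v

lemma eq_of_partner_eq_self {v : α} (h : hp.partner v = v) : v = b := by
  have hpos := congrArg hp.position h
  rw [position_partner] at hpos
  rw [← hp.getVert_position v, eq_of_pairIndex_eq_self (hp.position_le_length v) hpos,
    getVert_length]

lemma mk_partner_mem_edges {v : α} (h : hp.partner v ≠ v) : s(v, hp.partner v) ∈ p.edges := by
  have hne : pairIndex p.length (hp.position v) ≠ hp.position v := fun h' =>
    h (by rw [partner_apply, h', getVert_position])
  rw [mk_mem_edges_iff_exists]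
  rcases pairIndex_adjacent hne with hadj | hadj
  · refine ⟨pairIndex p.length (hp.position v), by have := hp.position_le_length v; omega, ?_⟩
    rw [hadj, hp.getVert_position, ← partner_apply, Sym2.eq_swap]
  · refine ⟨hp.position v, by have := pairIndex_le (hp.position_le_length v); omega, ?_⟩
    rw [hadj, hp.getVert_position, ← partner_apply]

lemma partner_eq_or_eq {x y z : α} (hx : s(x, z) ∈ p.edges) (hy : s(z, y) ∈ p.edges)
    (hxy : x ≠ y) : hp.partner z = x ∨ hp.partner z = y := by
  -- `z` has two distinct neighbours on `p`, so it is an inner vertex and hence is paired.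
  have hposxy : hp.position x ≠ hp.position y := fun h => hxy (by
    rw [← hp.getVert_position x, h, hp.getVert_position])
  have hx' := hp.position_adjacent_of_mk_mem_edges hx
  have hy' := hp.position_adjacent_of_mk_mem_edges hy
  have hz := hp.position_le_length z
  have hne : pairIndex p.length (hp.position z) ≠ hp.position z := fun h => by
    have := eq_of_pairIndex_eq_self hz h
    have := hp.position_le_length x
    have := hp.position_le_length y
    omega
  have hadj := pairIndex_adjacent hne
  have : pairIndex p.length (hp.position z) = hp.position x ∨
      pairIndex p.length (hp.position z) = hp.position y := by omega
  rw [partner_apply]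
  rcases this with h | h
  · left; rw [h, getVert_position]
  · right; rw [h, getVert_position]

lemma card_le_card_support_partner_add_one [Fintype α] :
    Fintype.card α ≤ #hp.partner.support + 1 := by
  have : univ.erase b ⊆ hp.partner.support := fun v hv => by
    rw [Perm.mem_support]
    exact fun h => (mem_erase.1 hv).1 (hp.eq_of_partner_eq_self h)
  have := card_le_card this
  rw [card_erase_of_mem (mem_univ b), Finset.card_univ] at this
  omega

end SimpleGraph.Walk.IsHamiltonian

namespace SimpleGraph.Walk

variable {α : Type*} {G : SimpleGraph α}

lemma IsPath.exists_edges_eq_of_length_eq_two {u v : α} {w : G.Walk u v} (hw : w.IsPath)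
    (h : w.length = 2) : ∃ z, w.edges = [s(u, z), s(z, v)] ∧ u ≠ v := by
  match w, h with
  | .cons (v := z) _ (.cons _ .nil), _ =>
    refine ⟨z, by simp, fun huv => ?_⟩
    have := hw.support_nodup
    simp_all

variable [DecidableEq α]

theorem IsHamiltonian.exists_mem_edges_of_partner_eq {a b c d x y : α} {P : G.Walk a b}
    {Q : G.Walk c d} (hP : P.IsHamiltonian) (hQ : Q.IsHamiltonian) (h : hP.partner = hQ.partner)
    {w : G.Walk x y} (hw : w.IsPath) (hl : w.length = 2) (hwP : ∀ e ∈ w.edges, e ∈ P.edges) :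
    ∃ e ∈ w.edges, e ∈ Q.edges := by
  obtain ⟨z, hz, hxy⟩ := hw.exists_edges_eq_of_length_eq_two hl
  have hmem : s(z, hP.partner z) ∈ w.edges := by
    rcases hP.partner_eq_or_eq (hwP s(x, z) (by simp [hz])) (hwP s(z, y) (by simp [hz])) hxy
      with h' | h' <;> simp [hz, h', Sym2.eq_swap]
  refine ⟨_, hmem, h ▸ hQ.mk_partner_mem_edges fun hfix => ?_⟩
  rw [h, hfix] at hmem
  exact (w.adj_of_mem_edges hmem).ne rfl

end SimpleGraph.Walk

lemma not_sepWalks_two_of_partner_eq {n : ℕ} {a b c d : Fin n}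
    {P : (⊤ : SimpleGraph (Fin n)).Walk a b} {Q : (⊤ : SimpleGraph (Fin n)).Walk c d}
    (hP : P.IsHamiltonian) (hQ : Q.IsHamiltonian) (h : hP.partner = hQ.partner) :
    ¬ SepWalks 2 P Q := by
  rintro ⟨x, y, w, hw, hl, ⟨hwP, hwQ⟩ | ⟨hwQ, hwP⟩⟩
  · obtain ⟨e, he, heQ⟩ := hP.exists_mem_edges_of_partner_eq hQ h hw hl hwP
    exact hwQ e he heQ
  · obtain ⟨e, he, heP⟩ := hQ.exists_mem_edges_of_partner_eq hP h.symm hw hl hwQ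
    exact hwP e he heP

theorem hamPath_two_separated_upper_bound_general (n : ℕ) (F : Set (HamPath n))
    (hF : ∀ P ∈ F, ∀ Q ∈ F, P ≠ Q → SepHam 2 P Q) :
    F.ncard ≤ 2 ^ ((n + 1) / 2) * ((n + 1) / 2).factorial := by
  have hinj : Set.InjOn (fun P : HamPath n => P.isHamiltonian.partner) F :=
    fun P hP Q hQ h => by_contra fun hne =>
      not_sepWalks_two_of_partner_eq P.isHamiltonian Q.isHamiltonian h (hF P hP Q hQ hne)
  calc F.ncard
      ≤ #{σ : Perm (Fin n) | σ ^ 2 = 1 ∧ Fintype.card (Fin n) ≤ #σ.support + 1} := by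
        rw [← Set.ncard_coe_finset]
        refine Set.ncard_le_ncard_of_injOn _ (fun P _ => ?_) hinj (finite_toSet _)
        simp only [coe_filter, mem_univ, true_and, Set.mem_ofPred_eq]
        exact ⟨P.isHamiltonian.partner_sq, P.isHamiltonian.card_le_card_support_partner_add_one⟩
    _ ≤ _ := by simpa using Perm.card_involutions_le (α := Fin n)

/-- **Theorem 1, upper bound.** For every `n ≥ 3`, every family `F` of Hamiltonian paths
in `K_n` any two distinct members of which are `2`-separated satisfies
`|F| ≤ 2 ^ ⌈n/2⌉ * ⌈n/2⌉!`. -/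
theorem hamPath_two_separated_upper_bound (n : ℕ) (hn : 3 ≤ n) (F : Set (HamPath n))
    (hF : ∀ P ∈ F, ∀ Q ∈ F, P ≠ Q → SepHam 2 P Q) :
    F.ncard ≤ 2 ^ ((n + 1) / 2) * ((n + 1) / 2).factorial :=
  hamPath_two_separated_upper_bound_general n F hF
end

section
/- Let k > 2 be an even integer and let n be a positive multiple of k. Then there exists a family F of Hamiltonian paths in the complete graph on the vertex set {1,...,n} with |F| ≥ (n/k)! such that for any two distinct paths P, Q in F there is a path of k edges (on k+1 vertices) which is a subpath of one of P, Q and shares no edge with the other. -/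
/-!
Write `k = 2 * h` and `n = m * k`, and cut the vertex set into `m` blocks of `2 * h` vertices,
each with a first and a second half. A permutation `σ` of the blocks gives the Hamiltonian path
that runs through the first half of block `σ 0`, then for each `p` zigzags between the first half
of `σ (p + 1)` and the second half of `σ p`, and ends with the second half of `σ (m - 1)`.

Reading off the edges of the path of `τ`: an edge of the zigzag between `σ p` and `σ (p + 1)`
lies on it only if `σ p, σ (p + 1)` are consecutive in `τ`, and the edge entering that zigzag
only if `σ p, σ (p + 1)` are consecutive (for `p = 0`) or `σ (p - 1), σ (p + 1)` are two apart
(for `p ≥ 1`) in `τ`; here `h ≥ 2` is needed. If `σ ≠ τ`, some `p` escapes both conditions: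
otherwise induction on `q` shows that block `σ q` sits at position `r + q` in `τ` for a fixed
`r`, which forces `σ = τ`. Then those `2 * h` edges of the path of `σ` form a path edge-disjoint
from the path of `τ`.
-/

open SimpleGraph

section topWalkOfFn

variable {V : Type*}

def topWalkOfFn (f : ℕ → V) : (len : ℕ) → (∀ t < len, f t ≠ f (t + 1)) →
    (⊤ : SimpleGraph V).Walk (f 0) (f len)
  | 0, _ => .nil
  | len + 1, hf =>
    (topWalkOfFn f len fun t ht => hf t (Nat.lt_succ_of_lt ht)).concat
      ((top_adj _ _).mpr (hf len (Nat.lt_succ_self len)))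

variable (f : ℕ → V) (len : ℕ) (hf : ∀ t < len, f t ≠ f (t + 1))

@[simp]
theorem length_topWalkOfFn : (topWalkOfFn f len hf).length = len := by
  induction len with
  | zero => rfl
  | succ len ih => simp [topWalkOfFn, ih]

theorem support_topWalkOfFn :
    (topWalkOfFn f len hf).support = (List.range (len + 1)).map f := by
  induction len with
  | zero => rfl
  | succ len ih => simp [topWalkOfFn, Walk.support_concat, ih, List.range_succ]

theorem edges_topWalkOfFn :
    (topWalkOfFn f len hf).edges = (List.range len).map fun t => s(f t, f (t + 1)) := by
  induction len with
  | zero => rfl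
  | succ len ih => simp [topWalkOfFn, Walk.edges_concat, ih, List.range_succ]

theorem mem_edges_topWalkOfFn {e : Sym2 V} :
    e ∈ (topWalkOfFn f len hf).edges ↔ ∃ t < len, s(f t, f (t + 1)) = e := by
  simp [edges_topWalkOfFn]

theorem isPath_topWalkOfFn (hinj : Set.InjOn f (Set.Iic len)) :
    (topWalkOfFn f len hf).IsPath := by
  rw [Walk.isPath_def, support_topWalkOfFn]
  refine List.Nodup.map_on (fun x hx y hy hxy => hinj ?_ ?_ hxy) List.nodup_range <;> simp_all

theorem isHamiltonian_topWalkOfFn [Fintype V] [DecidableEq V] (hinj : Set.InjOn f (Set.Iic len))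
    (hcard : Fintype.card V = len + 1) : (topWalkOfFn f len hf).IsHamiltonian := by
  rw [Walk.isHamiltonian_iff_isPath_and_length_eq]
  exact ⟨isPath_topWalkOfFn f len hf hinj, by simp [hcard]⟩

end topWalkOfFn

theorem not_sepWalks_self {n k : ℕ} (hk : 0 < k) {a b : Fin n}
    (P : (⊤ : SimpleGraph (Fin n)).Walk a b) : ¬ SepWalks k P P := by
  rintro ⟨x, y, w, -, hw, hsep⟩
  obtain ⟨e, he⟩ : ∃ e, e ∈ w.edges := List.exists_mem_of_length_pos (by simpa [hw])
  rcases hsep with ⟨hin, hout⟩ | ⟨hin, hout⟩ <;> exact hout e he (hin e he)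

namespace Zigzag

theorem exists_step_ne {m : ℕ} (ρ : ℕ → ℕ) (hlast : ρ (m - 1) < m) (hne : ∃ i < m, ρ i ≠ i) :
    ∃ p, p + 1 < m ∧ ρ (p + 1) ≠ ρ p + 1 ∧ (1 ≤ p → ρ (p + 1) ≠ ρ (p - 1) + 2) := by
  by_contra! hstep
  have hρ : ∀ i < m, ρ i = ρ 0 + i := by
    intro i
    induction i using Nat.strong_induction_on with
    | _ i ih =>
      intro hi
      rcases i with _ | p
      · rfl
      by_cases h1 : ρ (p + 1) = ρ p + 1
      · have := ih p (by omega) (by omega)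
        omega
      · obtain ⟨hp, h2⟩ := hstep p hi h1
        have := ih (p - 1) (by omega) (by omega)
        omega
  obtain ⟨i, hi, hne⟩ := hne
  have := hρ (m - 1) (by omega)
  have := hρ i hi
  omega

section blockSeq

variable {m : ℕ}

def blockSeq (σ : Equiv.Perm (Fin m)) (i : ℕ) : ℕ :=
  if hi : i < m then σ ⟨i, hi⟩ else 0

theorem blockSeq_lt (hm : 0 < m) (σ : Equiv.Perm (Fin m)) (i : ℕ) : blockSeq σ i < m := by
  unfold blockSeq
  split
  · exact (σ _).isLt
  · exact hm

theorem blockSeq_eq_blockSeq_iff (σ τ : Equiv.Perm (Fin m)) {i j : ℕ} (hi : i < m)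
    (hj : j < m) : blockSeq τ i = blockSeq σ j ↔ i = blockSeq (τ⁻¹ * σ) j := by
  simp only [blockSeq, dif_pos hi, dif_pos hj, Equiv.Perm.mul_apply]
  rw [Fin.val_inj, ← Equiv.Perm.eq_inv_iff_eq]
  exact Fin.ext_iff

theorem blockSeq_inv_blockSeq (σ : Equiv.Perm (Fin m)) {i : ℕ} (hi : i < m) :
    blockSeq σ⁻¹ (blockSeq σ i) = i := by
  simp [blockSeq, hi]

theorem blockSeq_injOn (σ : Equiv.Perm (Fin m)) : Set.InjOn (blockSeq σ) (Set.Iio m) :=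
  Set.LeftInvOn.injOn fun _ hi => blockSeq_inv_blockSeq σ hi

def IsSeparating (m : ℕ) (β γ : ℕ → ℕ) (p : ℕ) : Prop :=
  (∀ t, t + 1 < m → γ t = β p → γ (t + 1) ≠ β (p + 1)) ∧
    (1 ≤ p → ∀ t, t + 2 < m → γ t = β (p - 1) → γ (t + 2) ≠ β (p + 1))

theorem exists_isSeparating {σ τ : Equiv.Perm (Fin m)} (hne : σ ≠ τ) :
    ∃ p, p + 1 < m ∧ IsSeparating m (blockSeq σ) (blockSeq τ) p := by
  have hm : 0 < m := Nat.pos_of_ne_zero fun h => by subst h; exact hne (Subsingleton.elim _ _)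
  have hnot_id : ∃ i < m, blockSeq (τ⁻¹ * σ) i ≠ i := by
    by_contra! h
    refine hne (Equiv.ext fun i => ?_)
    have := (blockSeq_eq_blockSeq_iff σ τ i.isLt i.isLt).2 (h i i.isLt).symm
    simpa [blockSeq, Fin.val_inj] using this.symm
  obtain ⟨p, hp, h1, h2⟩ := exists_step_ne _ (blockSeq_lt hm _ _) hnot_id
  refine ⟨p, hp, fun t ht e e' => h1 ?_, fun hp1 t ht e e' => h2 hp1 ?_⟩
  · rw [blockSeq_eq_blockSeq_iff σ τ (by omega) (by omega)] at e e'
    omega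
  · rw [blockSeq_eq_blockSeq_iff σ τ (by omega) (by omega)] at e e'
    omega

end blockSeq

section coord

variable (m h : ℕ) (β : ℕ → ℕ)

/-- The (block, index in the block) coordinates of the `t`-th vertex of the zigzag path through
blocks of size `2 * h` in the order `β 0, …, β (m - 1)`. -/
def coord (t : ℕ) : ℕ × ℕ :=
  if t < h then (β 0, t)
  else if t < m * (2 * h) - h then
    if (t - h) % (2 * h) % 2 = 0 then (β ((t - h) / (2 * h) + 1), (t - h) % (2 * h) / 2)
    else (β ((t - h) / (2 * h)), h + (t - h) % (2 * h) / 2)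
  else (β (m - 1), h + (t - (m * (2 * h) - h)))

def position (π : ℕ → ℕ) (v : ℕ × ℕ) : ℕ :=
  if v.2 < h then
    if π v.1 = 0 then v.2 else h + 2 * h * (π v.1 - 1) + 2 * v.2
  else if π v.1 = m - 1 then m * (2 * h) - h + (v.2 - h)
  else h + 2 * h * π v.1 + (2 * (v.2 - h) + 1)

def edgeAt (t : ℕ) : Sym2 (ℕ × ℕ) := s(coord m h β t, coord m h β (t + 1))

variable {m h}

theorem bridge_lt {q j : ℕ} (hq : q + 1 < m) (hj : j < 2 * h) :
    h + 2 * h * q + j < m * (2 * h) - h := by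
  have : 2 * h * (q + 2) ≤ m * (2 * h) := by
    rw [mul_comm m]
    exact Nat.mul_le_mul_left _ hq
  rw [mul_add] at this
  omega

theorem coord_head {t : ℕ} (ht : t < h) : coord m h β t = (β 0, t) := if_pos ht

theorem coord_bridge (hh : 0 < h) {q j : ℕ} (hq : q + 1 < m) (hj : j < 2 * h) :
    coord m h β (h + 2 * h * q + j) =
      if j % 2 = 0 then (β (q + 1), j / 2) else (β q, h + j / 2) := by
  have hdiv : (2 * h * q + j) / (2 * h) = q := by
    rw [Nat.mul_add_div (by omega), Nat.div_eq_of_lt hj, add_zero]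
  have hmod : (2 * h * q + j) % (2 * h) = j := by
    rw [Nat.mul_add_mod, Nat.mod_eq_of_lt hj]
  rw [coord, if_neg (by omega), if_pos (bridge_lt hq hj), Nat.add_assoc, Nat.add_sub_cancel_left,
    hdiv, hmod]

theorem coord_tail (hm : 0 < m) (j : ℕ) :
    coord m h β (m * (2 * h) - h + j) = (β (m - 1), h + j) := by
  have : 2 * h ≤ m * (2 * h) := Nat.le_mul_of_pos_left _ hm
  rw [coord, if_neg (by omega), if_neg (by omega), Nat.add_sub_cancel_left]

theorem position_cases (hm : 0 < m) (hh : 0 < h) {t : ℕ} (ht : t < m * (2 * h)) :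
    t < h ∨ (∃ q j, q + 1 < m ∧ j < 2 * h ∧ t = h + 2 * h * q + j) ∨
      ∃ j < h, t = m * (2 * h) - h + j := by
  by_cases h1 : t < h
  · exact .inl h1
  by_cases h2 : t < m * (2 * h) - h
  · refine .inr (.inl ⟨(t - h) / (2 * h), (t - h) % (2 * h), ?_, Nat.mod_lt _ (by omega),
      by have := Nat.div_add_mod (t - h) (2 * h); omega⟩)
    have : (t - h) / (2 * h) < m - 1 := by
      rw [Nat.div_lt_iff_lt_mul (by omega), Nat.sub_mul, one_mul]
      omega
    omega
  · exact .inr (.inr ⟨t - (m * (2 * h) - h), by omega, by omega⟩)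

theorem coord_fst_lt (hβ : ∀ i, β i < m) (t : ℕ) : (coord m h β t).1 < m := by
  unfold coord
  split_ifs <;> exact hβ _

theorem coord_snd_lt (hm : 0 < m) (hh : 0 < h) {t : ℕ} (ht : t < m * (2 * h)) :
    (coord m h β t).2 < 2 * h := by
  rcases position_cases hm hh ht with ht | ⟨q, j, hq, hj, rfl⟩ | ⟨j, hj, rfl⟩
  · rw [coord_head β ht]; dsimp only; omega
  · rw [coord_bridge β hh hq hj]; split <;> dsimp only <;> omega
  · rw [coord_tail β hm j]; dsimp only; omega

theorem position_coord {π : ℕ → ℕ} (hπ : ∀ i < m, π (β i) = i) (hm : 0 < m) (hh : 0 < h)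
    {t : ℕ} (ht : t < m * (2 * h)) : position m h π (coord m h β t) = t := by
  rcases position_cases hm hh ht with ht | ⟨q, j, hq, hj, rfl⟩ | ⟨j, hj, rfl⟩
  · simp [coord_head β ht, position, ht, hπ 0 hm]
  · rw [coord_bridge β hh hq hj]
    split_ifs with hpar
    · simp only [position, hπ _ hq, if_pos (show j / 2 < h by omega), Nat.add_one_ne_zero,
        if_false, Nat.add_sub_cancel]
      omega
    · simp only [position, hπ _ (by omega : q < m), if_neg (show ¬h + j / 2 < h by omega),
        if_neg (show q ≠ m - 1 by omega)]
      omega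
  · simp [coord_tail β hm j, position, hπ _ (by omega : m - 1 < m)]

theorem coord_injOn {π : ℕ → ℕ} (hπ : ∀ i < m, π (β i) = i) (hm : 0 < m) (hh : 0 < h) :
    Set.InjOn (coord m h β) (Set.Iio (m * (2 * h))) := fun t ht t' ht' he => by
  rw [← position_coord β hπ hm hh ht, ← position_coord β hπ hm hh ht', he]

end coord

inductive IsZigzagEdge (m h : ℕ) (β : ℕ → ℕ) : Sym2 (ℕ × ℕ) → Prop
  | head {i : ℕ} : i + 1 < h → IsZigzagEdge m h β s((β 0, i), (β 0, i + 1))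
  | headExit : 1 < m → IsZigzagEdge m h β s((β 0, h - 1), (β 1, 0))
  | bridge {q a b : ℕ} : q + 1 < m → a < h → h ≤ b → (b = h + a ∨ b + 1 = h + a) →
      IsZigzagEdge m h β s((β (q + 1), a), (β q, b))
  | skip {q : ℕ} : q + 2 < m → IsZigzagEdge m h β s((β q, 2 * h - 1), (β (q + 2), 0))
  | tailEntry : 1 < m → IsZigzagEdge m h β s((β (m - 2), 2 * h - 1), (β (m - 1), h))
  | tail {i : ℕ} : i + 1 < h → IsZigzagEdge m h β s((β (m - 1), h + i), (β (m - 1), h + i + 1))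

section edges

variable {m h : ℕ}

theorem exists_edgeAt_bridge (β : ℕ → ℕ) (hh : 0 < h) {q j : ℕ} (hq : q + 1 < m)
    (hj : j + 1 < 2 * h) :
    ∃ a b, a < h ∧ h ≤ b ∧ (b = h + a ∨ b + 1 = h + a) ∧
      edgeAt m h β (h + 2 * h * q + j) = s((β (q + 1), a), (β q, b)) := by
  rw [edgeAt, coord_bridge β hh hq (by omega), Nat.add_assoc _ j, coord_bridge β hh hq hj]
  by_cases hpar : j % 2 = 0
  · rw [if_pos hpar, if_neg (by omega)]
    exact ⟨j / 2, h + (j + 1) / 2, by omega, by omega, by omega, rfl⟩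
  · rw [if_neg hpar, if_pos (by omega), Sym2.eq_swap]
    exact ⟨(j + 1) / 2, h + j / 2, by omega, by omega, by omega, rfl⟩

theorem isZigzagEdge_edgeAt (β : ℕ → ℕ) (hm : 2 ≤ m) (hh : 0 < h) {t : ℕ}
    (ht : t + 1 < m * (2 * h)) : IsZigzagEdge m h β (edgeAt m h β t) := by
  have h2h : 2 * h ≤ m * (2 * h) := Nat.le_mul_of_pos_left _ (by omega)
  rcases position_cases (by omega) hh (by omega : t < m * (2 * h)) with
    ht' | ⟨q, j, hq, hj, rfl⟩ | ⟨j, hj, rfl⟩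
  · rw [edgeAt, coord_head β ht']
    by_cases hth : t + 1 < h
    · rw [coord_head β hth]
      exact .head hth
    · have : coord m h β (t + 1) = (β 1, 0) := by
        rw [show t + 1 = h + 2 * h * 0 + 0 by omega, coord_bridge β hh (by omega) (by omega)]
        simp
      rw [this, show t = h - 1 by omega]
      exact .headExit (by omega)
  · by_cases hj' : j + 1 < 2 * h
    · obtain ⟨a, b, ha, hb, hab, he⟩ := exists_edgeAt_bridge β hh hq hj'
      rw [he]
      exact .bridge hq ha hb hab
    rw [edgeAt, coord_bridge β hh hq hj, if_neg (by omega), show h + j / 2 = 2 * h - 1 by omega]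
    by_cases hq' : q + 2 < m
    · have := coord_bridge β hh (q := q + 1) (j := 0) hq' (by omega)
      rw [show h + 2 * h * q + j + 1 = h + 2 * h * (q + 1) + 0 by rw [mul_add]; omega, this]
      exact .skip hq'
    · have : m * (2 * h) = 2 * h * q + 4 * h := by rw [show m = q + 2 by omega]; ring
      rw [show h + 2 * h * q + j + 1 = m * (2 * h) - h + 0 by omega, coord_tail β (by omega),
        show q = m - 2 by omega]
      exact .tailEntry (by omega)
  · rw [edgeAt, coord_tail β (by omega), Nat.add_assoc, coord_tail β (by omega), ← Nat.add_assoc]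
    exact .tail (by omega)

variable {γ : ℕ → ℕ}

theorem IsZigzagEdge.exists_of_cross {c d a b : ℕ} (he : IsZigzagEdge m h γ s((c, a), (d, b)))
    (ha : a < h) (hb : h ≤ b) :
    (∃ t, t + 1 < m ∧ γ t = d ∧ γ (t + 1) = c ∧ (b = h + a ∨ b + 1 = h + a)) ∨
      ∃ t, t + 2 < m ∧ γ t = d ∧ γ (t + 2) = c ∧ a = 0 ∧ b = 2 * h - 1 := by
  generalize hx : s((c, a), (d, b)) = e at he
  rcases he with _ | _ | ⟨hq, -, -, hab⟩ | hq | _ | _ <;>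
    simp only [Sym2.eq_iff, Prod.mk.injEq] at hx <;> try omega
  · rcases hx with ⟨⟨rfl, rfl⟩, rfl, rfl⟩ | _
    · exact .inl ⟨_, hq, rfl, rfl, hab⟩
    · omega
  · rcases hx with _ | ⟨⟨rfl, rfl⟩, rfl, rfl⟩
    · omega
    · exact .inr ⟨_, hq, rfl, rfl, rfl, rfl⟩

theorem IsZigzagEdge.eq_headExit {c d : ℕ} (he : IsZigzagEdge m h γ s((d, h - 1), (c, 0)))
    (hh : 2 ≤ h) (hcd : c ≠ d) : 1 < m ∧ γ 0 = d ∧ γ 1 = c := by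
  generalize hx : s((d, h - 1), (c, 0)) = e at he
  rcases he with _ | hm | _ | _ | _ | _ <;> simp only [Sym2.eq_iff, Prod.mk.injEq] at hx <;> omega

theorem edgeAt_window (β : ℕ → ℕ) (hh : 0 < h) {p i : ℕ} (hp : p + 1 < m) (hi : i < 2 * h) :
    (p = 0 ∧ edgeAt m h β (h + 2 * h * p - 1 + i) = s((β 0, h - 1), (β 1, 0))) ∨
      (1 ≤ p ∧ edgeAt m h β (h + 2 * h * p - 1 + i) = s((β (p + 1), 0), (β (p - 1), 2 * h - 1))) ∨
      ∃ a b, a < h ∧ h ≤ b ∧ (b = h + a ∨ b + 1 = h + a) ∧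
        edgeAt m h β (h + 2 * h * p - 1 + i) = s((β (p + 1), a), (β p, b)) := by
  rcases Nat.eq_zero_or_pos i with rfl | hi0
  · have hnext : coord m h β (h + 2 * h * p - 1 + 0 + 1) = (β (p + 1), 0) := by
      rw [show h + 2 * h * p - 1 + 0 + 1 = h + 2 * h * p + 0 by omega,
        coord_bridge β hh hp (by omega)]
      simp
    rw [edgeAt, hnext]
    rcases Nat.eq_zero_or_pos p with rfl | hp0
    · refine .inl ⟨rfl, ?_⟩
      rw [show h + 2 * h * 0 - 1 + 0 = h - 1 by omega, coord_head β (by omega)]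
    · refine .inr (.inl ⟨hp0, ?_⟩)
      have : 2 * h * p = 2 * h * (p - 1) + 2 * h := by
        rw [← Nat.mul_succ]; congr 1; omega
      rw [show h + 2 * h * p - 1 + 0 = h + 2 * h * (p - 1) + (2 * h - 1) by omega,
        coord_bridge β hh (by omega) (by omega), if_neg (by omega),
        show h + (2 * h - 1) / 2 = 2 * h - 1 by omega, Sym2.eq_swap]
  · obtain ⟨a, b, ha, hb, hab, he⟩ := exists_edgeAt_bridge β hh hp (j := i - 1) (by omega)
    refine .inr (.inr ⟨a, b, ha, hb, hab, ?_⟩)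
    rw [← he, show h + 2 * h * p - 1 + i = h + 2 * h * p + (i - 1) by omega]

theorem edgeAt_ne_of_isSeparating {β : ℕ → ℕ} (hh : 2 ≤ h) (hβ : β 1 ≠ β 0) {p : ℕ}
    (hp : p + 1 < m) (hsep : IsSeparating m β γ p) {i u : ℕ} (hi : i < 2 * h)
    (hu : u + 1 < m * (2 * h)) : edgeAt m h γ u ≠ edgeAt m h β (h + 2 * h * p - 1 + i) := by
  intro hedge
  have hγ := isZigzagEdge_edgeAt γ (by omega) (by omega) hu
  rw [hedge] at hγ
  obtain ⟨hpair, hskip⟩ := hsep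
  rcases edgeAt_window β (by omega) hp hi with
    ⟨rfl, hwe⟩ | ⟨hp1, hwe⟩ | ⟨a, b, ha, hb, hab, hwe⟩ <;> rw [hwe] at hγ
  · obtain ⟨hm1, h0, h1⟩ := hγ.eq_headExit hh hβ
    exact hpair 0 hm1 h0 h1
  · rcases hγ.exists_of_cross (by omega) (by omega) with ⟨t, -, -, -, hab⟩ | ⟨t, ht, h0, h2, -⟩
    · omega
    · exact hskip hp1 t ht h0 h2
  · rcases hγ.exists_of_cross ha hb with ⟨t, ht, h0, h1, -⟩ | ⟨-, -, -, -, rfl, rfl⟩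
    · exact hpair t ht h0 h1
    · omega

end edges

section vertex

variable {m h : ℕ}

def encode (h : ℕ) (v : ℕ × ℕ) : ℕ := v.1 * (2 * h) + v.2

def decode (h : ℕ) (x : ℕ) : ℕ × ℕ := (x / (2 * h), x % (2 * h))

theorem decode_encode {v : ℕ × ℕ} (hv : v.2 < 2 * h) : decode h (encode h v) = v := by
  rw [decode, encode, Nat.add_comm, Nat.add_mul_div_right _ _ (by omega), Nat.div_eq_of_lt hv,
    Nat.zero_add, Nat.add_mul_mod_self_right, Nat.mod_eq_of_lt hv]

theorem encode_lt {v : ℕ × ℕ} (h1 : v.1 < m) (h2 : v.2 < 2 * h) : encode h v < m * (2 * h) := by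
  rw [encode]
  nlinarith

def vertex (hm : 0 < m) (hh : 0 < h) (σ : Equiv.Perm (Fin m)) (t : ℕ) : Fin (m * (2 * h)) :=
  ⟨encode h (coord m h (blockSeq σ) t) % (m * (2 * h)), Nat.mod_lt _ (by positivity)⟩

variable (hm : 0 < m) (hh : 0 < h) (σ : Equiv.Perm (Fin m))

theorem decode_vertex {t : ℕ} (ht : t < m * (2 * h)) :
    decode h (vertex hm hh σ t) = coord m h (blockSeq σ) t := by
  have h1 := coord_snd_lt (blockSeq σ) hm hh ht
  have h2 : (coord m h (blockSeq σ) t).1 < m := coord_fst_lt _ (blockSeq_lt hm σ) t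
  simp only [vertex, Nat.mod_eq_of_lt (encode_lt h2 h1), decode_encode h1]

theorem vertex_injOn : Set.InjOn (vertex hm hh σ) (Set.Iio (m * (2 * h))) := by
  intro t ht t' ht' he
  refine coord_injOn (blockSeq σ) (fun i hi => blockSeq_inv_blockSeq σ hi) hm hh ht ht' ?_
  rw [← decode_vertex hm hh σ ht, ← decode_vertex hm hh σ ht', he]

theorem vertex_ne_vertex_succ {t : ℕ} (ht : t < m * (2 * h) - 1) :
    vertex hm hh σ t ≠ vertex hm hh σ (t + 1) :=
  fun he => by have := vertex_injOn hm hh σ (by simp; omega) (by simp; omega) he; omega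

def zigzag : HamPath (m * (2 * h)) :=
  have : 0 < m * (2 * h) := by positivity
  ⟨_, _, topWalkOfFn (vertex hm hh σ) (m * (2 * h) - 1) fun _ => vertex_ne_vertex_succ hm hh σ,
    isHamiltonian_topWalkOfFn _ _ _
      ((vertex_injOn hm hh σ).mono fun t ht => by simp at ht ⊢; omega) (by simp; omega)⟩

end vertex

theorem sepHam_zigzag {m h : ℕ} (hm : 0 < m) (hh : 2 ≤ h) {σ τ : Equiv.Perm (Fin m)}
    (hne : σ ≠ τ) :
    SepHam (2 * h) (zigzag hm (by omega : 0 < h) σ) (zigzag hm (by omega : 0 < h) τ) := by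
  have hh0 : 0 < h := by omega
  obtain ⟨p, hp, hsep⟩ := exists_isSeparating hne
  set w := h + 2 * h * p - 1
  have hwin : w + 2 * h < m * (2 * h) - 1 := by
    have := bridge_lt (h := h) hp (j := 2 * h - 1) (by omega)
    omega
  have hinj : Set.InjOn (fun i => vertex hm hh0 σ (w + i)) (Set.Iic (2 * h)) :=
    fun i hi j hj he => by
      have := vertex_injOn hm hh0 σ (by simp at hi ⊢; omega) (by simp at hj ⊢; omega) he
      omega
  refine ⟨_, _, topWalkOfFn (fun i => vertex hm hh0 σ (w + i)) (2 * h)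
    (fun i hi he => by have := hinj (by simp; omega) (by simp; omega) he; omega),
    isPath_topWalkOfFn _ _ _ hinj, length_topWalkOfFn .., .inl ⟨?_, ?_⟩⟩
  · intro e he
    obtain ⟨i, hi, rfl⟩ := (mem_edges_topWalkOfFn ..).1 he
    exact (mem_edges_topWalkOfFn ..).2 ⟨w + i, by omega, rfl⟩
  · intro e he hτ
    obtain ⟨i, hi, rfl⟩ := (mem_edges_topWalkOfFn ..).1 he
    obtain ⟨u, hu, hue⟩ := (mem_edges_topWalkOfFn ..).1 hτ
    have hβ : blockSeq σ 1 ≠ blockSeq σ 0 := fun e => by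
      have := blockSeq_injOn σ (by simp; omega) (by simp; omega) e
      omega
    refine edgeAt_ne_of_isSeparating hh hβ hp hsep (show i < 2 * h by omega)
      (show u + 1 < m * (2 * h) by omega) ?_
    have := congrArg (Sym2.map fun x : Fin (m * (2 * h)) => decode h x) hue
    rwa [Sym2.map_mk, Sym2.map_mk, decode_vertex hm _ τ (by omega), decode_vertex hm _ τ (by omega),
      decode_vertex hm _ σ (by omega), decode_vertex hm _ σ (by omega), ← Nat.add_assoc] at this

theorem zigzag_injective {m h : ℕ} (hm : 0 < m) (hh : 2 ≤ h) :
    Function.Injective (zigzag hm (by omega : 0 < h)) := by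
  intro σ τ he
  by_contra hne
  have := sepHam_zigzag hm hh hne
  rw [he] at this
  exact not_sepWalks_self (by omega) _ this

end Zigzag

/-- **Theorem 2, lower bound.** For every even `k > 2` and every positive multiple `n`
of `k` there is a family `F` of Hamiltonian paths in `K_n` with `|F| ≥ (n/k)!` such that
any two distinct members are `k`-separated. -/
theorem hamPath_separated_lower_bound_even (k n : ℕ) (hk : 2 < k) (hke : Even k)
    (hn : 0 < n) (hkn : k ∣ n) :
    ∃ F : Set (HamPath n),
      (∀ P ∈ F, ∀ Q ∈ F, P ≠ Q → SepHam k P Q) ∧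
      (n / k).factorial ≤ F.ncard := by
  obtain ⟨h, rfl⟩ : ∃ h, k = 2 * h := by obtain ⟨h, rfl⟩ := hke; exact ⟨h, by ring⟩
  obtain ⟨m, rfl⟩ : ∃ m, n = m * (2 * h) := by obtain ⟨m, rfl⟩ := hkn; exact ⟨m, by ring⟩
  have hm : 0 < m := Nat.pos_of_mul_pos_right hn
  refine ⟨Set.range (Zigzag.zigzag hm (by omega : 0 < h)), ?_, ?_⟩
  · rintro _ ⟨σ, rfl⟩ _ ⟨τ, rfl⟩ hne
    exact Zigzag.sepHam_zigzag hm (by omega) fun e => hne (congrArg _ e)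
  · rw [Set.ncard_range_of_injective (Zigzag.zigzag_injective hm (by omega)), Nat.card_perm,
      Nat.card_eq_fintype_card, Fintype.card_fin, Nat.mul_div_cancel _ (by omega)]
end

section
/- Let k > 2 be an even integer and let n be a positive multiple of k. Then any family F of Hamiltonian paths in the complete graph on the vertex set {1,...,n} such that for any two distinct paths P, Q in F there is a path of k edges which is a subpath of one of P, Q and shares no edge with the other, satisfies |F| ≤ 3^n·(n/k)!. -/
open SimpleGraph

/-!
Cut a Hamiltonian path `P` into consecutive blocks of `k` vertices. A path with `k` edges inside
`P` has `k + 1` vertices, so it cannot stay inside one block and uses an edge of `P` joining two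
consecutive blocks. Hence two members of a `k`-separated family never have the same
block-joining edges. These `m = (n - 1) / k` edges, oriented along `P`, form a matching; as tails
and heads are distinct for `k ≠ 1`, it is determined by the colouring of the vertices into tails,
heads and the rest together with a permutation of `Fin m` matching the tails to the heads. So
there are at most `3 ^ n * m!` members.
-/

namespace Set.BijOn

variable {α β : Type*} [Finite α] [Finite β] {s : Set α} {t : Set β} {f : α → β} {m : ℕ}

noncomputable def finPerm (hf : BijOn f s t) (hs : Nat.card s = m) : Equiv.Perm (Fin m) :=
  (Finite.equivFinOfCardEq hs).symm.trans <| (hf.equiv f).trans <|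
    Finite.equivFinOfCardEq <| (Nat.card_congr (hf.equiv f)).symm.trans hs

theorem eqOn_of_finPerm_eq {s' : Set α} {t' : Set β} {g : α → β} (hs' : s = s') (ht' : t = t')
    (hf : BijOn f s t) (hg : BijOn g s' t') (hs : Nat.card s = m) (hgs : Nat.card s' = m)
    (h : hf.finPerm hs = hg.finPerm hgs) : EqOn f g s := by
  subst hs' ht'
  intro v hv
  have := congr($h (Finite.equivFinOfCardEq hs ⟨v, hv⟩))
  simpa [finPerm, Set.BijOn.equiv, Subtype.ext_iff] using this

end Set.BijOn

theorem Set.ncard_le_three_pow_mul_factorial {α ι : Type*} [Finite α] {S : Set ι} {m : ℕ}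
    (L : ι → Set α) (f : ι → α → α) (hL : ∀ x ∈ S, (L x).ncard = m)
    (hf : ∀ x ∈ S, InjOn (f x) (L x)) (hLf : ∀ x ∈ S, Disjoint (L x) (f x '' L x))
    (hS : ∀ x ∈ S, ∀ y ∈ S, L x = L y → EqOn (f x) (f y) (L x) → x = y) :
    S.ncard ≤ 3 ^ Nat.card α * m.factorial := by
  classical
  let color (x : ι) (v : α) : Fin 3 := if v ∈ L x then 1 else if v ∈ f x '' L x then 2 else 0
  have hcolor {x y : ι} (hx : x ∈ S) (hy : y ∈ S) (h : color x = color y) :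
      L x = L y ∧ f x '' L x = f y '' L y := by
    have hv (v : α) : (v ∈ L x ↔ v ∈ L y) ∧ (v ∈ f x '' L x ↔ v ∈ f y '' L y) := by
      have hxy := congrFun h v
      have hx' : v ∈ L x → v ∉ f x '' L x := fun hv => Set.disjoint_left.1 (hLf x hx) hv
      have hy' : v ∈ L y → v ∉ f y '' L y := fun hv => Set.disjoint_left.1 (hLf y hy) hv
      simp only [color] at hxy
      split_ifs at hxy <;> tauto
    exact ⟨Set.ext fun v => (hv v).1, Set.ext fun v => (hv v).2⟩
  let Φ : S → (α → Fin 3) × Equiv.Perm (Fin m) := fun x =>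
    (color x, ((hf x x.2).bijOn_image).finPerm ((Nat.card_coe_set_eq _).trans (hL x x.2)))
  have hΦ : Function.Injective Φ := by
    rintro ⟨x, hx⟩ ⟨y, hy⟩ hxy
    obtain ⟨hc, hσ⟩ := Prod.ext_iff.1 hxy
    obtain ⟨hLxy, himg⟩ := hcolor hx hy hc
    exact Subtype.ext <| hS x hx y hy hLxy (BijOn.eqOn_of_finPerm_eq hLxy himg _ _ _ _ hσ)
  calc S.ncard = Nat.card S := (Nat.card_coe_set_eq S).symm
    _ ≤ Nat.card ((α → Fin 3) × Equiv.Perm (Fin m)) := Nat.card_le_card_of_injective Φ hΦ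
    _ = 3 ^ Nat.card α * m.factorial := by
      rw [Nat.card_prod, Nat.card_fun, Nat.card_perm, Nat.card_fin, Nat.card_fin]

namespace SimpleGraph.Walk

variable {V : Type*} {G : SimpleGraph V} {a b x y : V}

theorem apply_eq_of_forall_mk_mem_edges {β : Type*} {f : V → β} (w : G.Walk x y)
    (h : ∀ u v, s(u, v) ∈ w.edges → f u = f v) : ∀ v ∈ w.support, f v = f x := by
  induction w with
  | nil => simp
  | @cons x z y _ q ih =>
    have hxz : f z = f x := (h x z (by simp)).symm
    intro v hv
    rcases List.mem_cons.1 hv with rfl | hv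
    · rfl
    · exact (ih (fun u v huv => h u v (by simp [huv])) v hv).trans hxz

variable (k : ℕ) (p : G.Walk a b)

/-- Cutting `p` into blocks of `k` consecutive positions `jk, …, jk + k - 1`, these are the tails
of the edges joining a block to the next one. -/
def crossingStarts : Set V :=
  p.getVert '' ({i ∈ Finset.range p.length | k ∣ i + 1} : Finset ℕ)

variable {k p} {v : V}

theorem mem_crossingStarts_iff :
    v ∈ p.crossingStarts k ↔ ∃ i < p.length, k ∣ i + 1 ∧ p.getVert i = v := by
  simp [crossingStarts, and_assoc]

theorem IsPath.ncard_crossingStarts (hp : p.IsPath) :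
    (p.crossingStarts k).ncard = p.length / k := by
  rw [crossingStarts, Set.InjOn.ncard_image, Set.ncard_coe_finset, Nat.card_multiples]
  exact hp.getVert_injOn.mono fun i hi => by
    simp only [Finset.coe_filter, Finset.mem_range, Set.mem_ofPred_eq] at hi ⊢; omega

variable (p) [DecidableEq V]

def nextVert (v : V) : V := p.getVert (p.support.idxOf v + 1)

variable {p}

theorem IsPath.idxOf_getVert (hp : p.IsPath) {i : ℕ} (hi : i ≤ p.length) :
    p.support.idxOf (p.getVert i) = i := by
  refine hp.getVert_injOn ?_ hi (p.getVert_support_idxOf (p.getVert_mem_support i))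
  have := List.idxOf_lt_length_iff.2 (p.getVert_mem_support i)
  simp only [length_support] at this
  exact Nat.lt_succ_iff.1 this

theorem IsPath.nextVert_getVert (hp : p.IsPath) {i : ℕ} (hi : i ≤ p.length) :
    p.nextVert (p.getVert i) = p.getVert (i + 1) := by
  rw [nextVert, hp.idxOf_getVert hi]

theorem IsPath.mk_nextVert_mem_edges (hp : p.IsPath) {v : V} (hv : v ∈ p.crossingStarts k) :
    s(v, p.nextVert v) ∈ p.edges := by
  obtain ⟨i, hi, -, rfl⟩ := mem_crossingStarts_iff.1 hv
  rw [hp.nextVert_getVert hi.le]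
  exact p.mk_mem_edges_iff_exists.2 ⟨i, hi, rfl⟩

theorem IsPath.injOn_nextVert (hp : p.IsPath) : Set.InjOn p.nextVert (p.crossingStarts k) := by
  rintro _ hu _ hv huv
  obtain ⟨i, hi, -, rfl⟩ := mem_crossingStarts_iff.1 hu
  obtain ⟨j, hj, -, rfl⟩ := mem_crossingStarts_iff.1 hv
  rw [hp.nextVert_getVert hi.le, hp.nextVert_getVert hj.le] at huv
  rw [Nat.add_right_cancel
    (hp.getVert_injOn (show i + 1 ≤ p.length by omega) (show j + 1 ≤ p.length by omega) huv)]

theorem IsPath.disjoint_crossingStarts_image_nextVert (hp : p.IsPath) (hk : k ≠ 1) :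
    Disjoint (p.crossingStarts k) (p.nextVert '' p.crossingStarts k) := by
  refine Set.disjoint_left.2 ?_
  rintro _ hu ⟨_, hv, huv⟩
  obtain ⟨i, hi, hki, rfl⟩ := mem_crossingStarts_iff.1 hu
  obtain ⟨j, hj, hkj, rfl⟩ := mem_crossingStarts_iff.1 hv
  rw [hp.nextVert_getVert hj.le] at huv
  have hij : j + 1 = i :=
    hp.getVert_injOn (show j + 1 ≤ p.length by omega) (show i ≤ p.length by omega) huv
  subst hij
  exact hk (Nat.dvd_one.1 ((Nat.dvd_add_right hkj).1 hki))

theorem IsPath.exists_mem_crossingStarts_mk_nextVert_mem_edges (hp : p.IsPath) (hk : 0 < k)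
    {w : G.Walk x y} (hw : w.IsPath) (hlen : w.length = k)
    (hwp : ∀ e ∈ w.edges, e ∈ p.edges) :
    ∃ v ∈ p.crossingStarts k, s(v, p.nextVert v) ∈ w.edges := by
  by_contra! hno
  set pos := p.support.idxOf
  -- no edge of `w` leaves a block, so the `k + 1` vertices of `w` lie in one block of size `k`
  have hblock : ∀ u v, s(u, v) ∈ w.edges → pos u / k = pos v / k := by
    intro u v huv
    obtain ⟨i, hi, he⟩ := p.mk_mem_edges_iff_exists.1 (hwp _ huv)
    have hki : ¬ k ∣ i + 1 := fun hki =>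
      hno _ (mem_crossingStarts_iff.2 ⟨i, hi, hki, rfl⟩)
        (by rwa [hp.nextVert_getVert hi.le, he])
    have hdiv := Nat.succ_div_of_not_dvd hki
    rcases Sym2.eq_iff.1 he with ⟨rfl, rfl⟩ | ⟨rfl, rfl⟩ <;>
      simp [pos, hp.idxOf_getVert hi.le, hp.idxOf_getVert hi, hdiv]
  have hsupp : ∀ v ∈ w.support, v ∈ p.support := fun v hv => by
    obtain ⟨e, he, hve⟩ := (mem_support_iff_exists_mem_edges_of_not_nil
      (by rw [← length_eq_zero_iff]; omega)).1 hv
    exact p.mem_support_of_mem_edges (hwp e he) hve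
  obtain ⟨u, hu, v, hv, huv, hmod⟩ := Finset.exists_ne_map_eq_of_card_lt_of_maps_to
    (s := w.support.toFinset) (t := Finset.range k) (f := (pos · % k))
    (by simp [List.toFinset_card_of_nodup hw.support_nodup, hlen])
    (fun v _ => by simp [Nat.mod_lt _ hk])
  rw [List.mem_toFinset] at hu hv
  have hpos : pos u = pos v := by
    rw [← Nat.div_add_mod (pos u) k, ← Nat.div_add_mod (pos v) k,
      w.apply_eq_of_forall_mk_mem_edges hblock u hu, w.apply_eq_of_forall_mk_mem_edges hblock v hv]
    exact congrArg _ hmod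
  rw [← p.getVert_support_idxOf (hsupp u hu), ← p.getVert_support_idxOf (hsupp v hv)] at huv
  exact huv (congrArg _ hpos)

theorem IsPath.exists_mem_edges_of_eqOn_nextVert {c d : V} {q : G.Walk c d} (hp : p.IsPath)
    (hq : q.IsPath) (hk : 0 < k) (hpq : p.crossingStarts k = q.crossingStarts k)
    (hnext : Set.EqOn p.nextVert q.nextVert (p.crossingStarts k))
    {w : G.Walk x y} (hw : w.IsPath) (hlen : w.length = k)
    (hwp : ∀ e ∈ w.edges, e ∈ p.edges) :
    ∃ e ∈ w.edges, e ∈ q.edges := by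
  obtain ⟨v, hv, hvw⟩ := hp.exists_mem_crossingStarts_mk_nextVert_mem_edges hk hw hlen hwp
  exact ⟨_, hvw, hnext hv ▸ hq.mk_nextVert_mem_edges (hpq ▸ hv)⟩

end SimpleGraph.Walk

theorem not_sepWalks_of_eqOn_nextVert {n k : ℕ} (hk : 0 < k) {a b c d : Fin n}
    {P : (⊤ : SimpleGraph (Fin n)).Walk a b} {Q : (⊤ : SimpleGraph (Fin n)).Walk c d}
    (hP : P.IsPath) (hQ : Q.IsPath) (hPQ : P.crossingStarts k = Q.crossingStarts k)
    (hnext : Set.EqOn P.nextVert Q.nextVert (P.crossingStarts k)) : ¬ SepWalks k P Q := by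
  rintro ⟨x, y, w, hw, hlen, ⟨hwP, hwQ⟩ | ⟨hwQ, hwP⟩⟩
  · obtain ⟨e, he, heQ⟩ := hP.exists_mem_edges_of_eqOn_nextVert hQ hk hPQ hnext hw hlen hwP
    exact hwQ e he heQ
  · obtain ⟨e, he, heP⟩ :=
      hQ.exists_mem_edges_of_eqOn_nextVert hP hk hPQ.symm (hPQ ▸ hnext.symm) hw hlen hwQ
    exact hwP e he heP

theorem hamPath_separated_upper_bound_even_general (k n : ℕ) (hk : 2 < k) (F : Set (HamPath n))
    (hF : ∀ P ∈ F, ∀ Q ∈ F, P ≠ Q → SepHam k P Q) :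
    F.ncard ≤ 3 ^ n * (n / k).factorial := by
  have hpath (P : HamPath n) : P.walk.IsPath := P.isHamiltonian.isPath
  have hlength (P : HamPath n) : P.walk.length = n - 1 := by simpa using P.isHamiltonian.length_eq
  calc F.ncard ≤ 3 ^ Nat.card (Fin n) * ((n - 1) / k).factorial :=
        Set.ncard_le_three_pow_mul_factorial (fun P => P.walk.crossingStarts k)
          (fun P => P.walk.nextVert)
          (fun P _ => by rw [(hpath P).ncard_crossingStarts, hlength])
          (fun P _ => (hpath P).injOn_nextVert)
          (fun P _ => (hpath P).disjoint_crossingStarts_image_nextVert (by omega))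
          (fun P hP Q hQ hPQ hnext => by_contra fun hne =>
            not_sepWalks_of_eqOn_nextVert (by omega) (hpath P) (hpath Q) hPQ hnext
              (hF P hP Q hQ hne))
    _ ≤ 3 ^ n * (n / k).factorial := by
      rw [Nat.card_fin]
      gcongr
      omega

/-- **Theorem 2, upper bound.** For every even `k > 2` and every positive multiple `n`
of `k`, every family `F` of Hamiltonian paths in `K_n` any two distinct members of which
are `k`-separated satisfies `|F| ≤ 3 ^ n * (n/k)!`. -/
theorem hamPath_separated_upper_bound_even (k n : ℕ) (hk : 2 < k) (hke : Even k)
    (hn : 0 < n) (hkn : k ∣ n) (F : Set (HamPath n))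
    (hF : ∀ P ∈ F, ∀ Q ∈ F, P ≠ Q → SepHam k P Q) :
    F.ncard ≤ 3 ^ n * (n / k).factorial :=
  hamPath_separated_upper_bound_even_general k n hk F hF
end

section
/- Let k ≥ 3 be an odd integer and let n be a positive multiple of k. Then any family F of Hamiltonian paths in the complete graph on the vertex set {1,...,n} such that for any two distinct paths P, Q in F there is a path of k edges which is a subpath of one of P, Q and shares no edge with the other, satisfies |F| ≤ 3^n·(n/k)!. -/
open SimpleGraph

/-!
Cut a Hamiltonian path `v₀ v₁ … v_{n-1}` after every `k`-th edge: the cut edges are the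
`s(v_i, v_{i+1})` with `i ≡ k - 1 (mod k)`. A path with `k` edges lying on the Hamiltonian path
runs along `k` consecutive edges of it, so it contains a cut edge. Hence two members of a
`k`-separated family cannot have the same set of cut edges: the separating subpath of one of
them would contain a cut edge shared with the other. The cut edges form at most `n / k` disjoint
edges, each oriented from its left end to its right end; the set of cut edges is therefore
determined by the colouring of the vertices into left ends, right ends and the rest (`3 ^ n`
choices) together with an injection from the left ends into the at most `n / k` right ends
(at most `(n / k)!` choices).
-/

open Finset Function
open scoped Nat

theorem Nat.descFactorial_le_factorial (n k : ℕ) : n.descFactorial k ≤ n ! := by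
  rcases le_or_gt k n with h | h
  · rw [← Nat.factorial_mul_descFactorial h]
    exact Nat.le_mul_of_pos_left _ (Nat.factorial_pos _)
  · simp [Nat.descFactorial_eq_zero_iff_lt.2 h]

theorem Set.ncard_le_card_mul_of_ncard_fiber_le {α β : Type*} [Fintype β]
    {s : Set α} (f : α → β) (c : ℕ) (h : ∀ a ∈ s, {x ∈ s | f x = f a}.ncard ≤ c) :
    s.ncard ≤ Fintype.card β * c := by
  classical
  rcases s.finite_or_infinite with hs | hs
  · lift s to Finset α using hs
    rw [Set.ncard_coe_finset, mul_comm]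
    refine (Finset.card_le_mul_card_image (f := f) s c fun b hb => ?_).trans
      (Nat.mul_le_mul_left c (Finset.card_le_univ _))
    obtain ⟨a, ha, rfl⟩ := Finset.mem_image.1 hb
    simpa [← Set.ncard_coe_finset] using h a ha
  · simp [hs.ncard]

theorem Set.ncard_setOf_injective_mem_le {α β : Type*} [Fintype α] (t : Finset β) :
    {g : α → β | Injective g ∧ ∀ a, g a ∈ t}.ncard ≤
      (#t).descFactorial (Fintype.card α) := by
  classical
  rw [← Nat.card_coe_set_eq, ← Fintype.card_coe t, ← Fintype.card_embedding_eq,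
    ← Nat.card_eq_fintype_card]
  refine Nat.card_le_card_of_injective
    (fun g => ⟨fun a => ⟨g.1 a, g.2.2 a⟩, fun a b hab => g.2.1 (congrArg Subtype.val hab)⟩)
    fun g h hgh => Subtype.ext (funext fun a => congrArg Subtype.val (DFunLike.congr_fun hgh a))

theorem Nat.eq_add_or_add_eq_of_injOn_of_step (f : ℕ → ℕ) (K : ℕ)
    (hstep : ∀ t < K, f (t + 1) = f t + 1 ∨ f t = f (t + 1) + 1)
    (hinj : Set.InjOn f (Set.Iic K)) :
    (∀ t ≤ K, f t = f 0 + t) ∨ (∀ t ≤ K, f t + t = f 0) := by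
  induction K with
  | zero => exact .inl fun t ht => by rw [Nat.le_zero.1 ht, add_zero]
  | succ K ih =>
    have ih := ih (fun t ht => hstep t (by omega)) (hinj.mono (Set.Iic_subset_Iic.2 K.le_succ))
    have back (hK : 0 < K) : f (K + 1) ≠ f (K - 1) := fun h => by
      have := hinj (show K + 1 ∈ Set.Iic (K + 1) by simp)
        (show K - 1 ∈ Set.Iic (K + 1) by simp; omega) h
      omega
    rcases ih with hinc | hdec <;> rcases hstep K K.lt_succ_self with h | h
    · refine .inl fun t ht => ?_
      rcases Nat.le_add_one_iff.1 ht with ht | rfl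
      · exact hinc t ht
      · have := hinc K le_rfl; omega
    · obtain rfl | hK := K.eq_zero_or_pos
      · rw [zero_add] at h
        exact .inr fun t ht => by interval_cases t <;> omega
      · have := hinc (K - 1) (by omega); have := hinc K le_rfl
        exact absurd (by omega) (back hK)
    · obtain rfl | hK := K.eq_zero_or_pos
      · rw [zero_add] at h
        exact .inl fun t ht => by interval_cases t <;> omega
      · have := hdec (K - 1) (by omega); have := hdec K le_rfl
        exact absurd (by omega) (back hK)
    · refine .inr fun t ht => ?_
      rcases Nat.le_add_one_iff.1 ht with ht | rfl
      · exact hdec t ht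
      · have := hdec K le_rfl; omega

namespace SimpleGraph.Walk

variable {V : Type*} {G : SimpleGraph V} {u v x y : V}

theorem IsPath.eq_add_one_or_eq_add_one_of_mk_mem_edges {p : G.Walk u v} (hp : p.IsPath)
    {i j : ℕ} (hi : i ≤ p.length) (hj : j ≤ p.length)
    (h : s(p.getVert i, p.getVert j) ∈ p.edges) : j = i + 1 ∨ i = j + 1 := by
  obtain ⟨l, hl, he⟩ := p.mk_mem_edges_iff_exists.1 h
  have inj {a b : ℕ} (ha : a ≤ p.length) (hb : b ≤ p.length) :
      p.getVert a = p.getVert b → a = b := fun hab => hp.getVert_injOn ha hb hab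
  rcases Sym2.eq_iff.1 he with ⟨h1, h2⟩ | ⟨h1, h2⟩
  · have := inj (by omega) hi h1; have := inj (by omega) hj h2; omega
  · have := inj (by omega) hj h1; have := inj (by omega) hi h2; omega

theorem IsPath.exists_consecutive_of_edges_subset {p : G.Walk u v} {w : G.Walk x y}
    (hp : p.IsPath) (hw : w.IsPath) (hsub : w.edges ⊆ p.edges) :
    ∃ a, a + w.length ≤ p.length ∧
      ∀ i ∈ Set.Ico a (a + w.length), s(p.getVert i, p.getVert (i + 1)) ∈ w.edges := by
  classical
  obtain hw0 | hw0 := w.length.eq_zero_or_pos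
  · exact ⟨0, by simp [hw0], fun i hi => by simp [hw0] at hi⟩
  have hmem (t : ℕ) : w.getVert t ∈ p.support := by
    obtain ⟨e, he, hte⟩ := (mem_support_iff_exists_mem_edges_of_not_nil
      (not_nil_iff_lt_length.2 hw0)).1 (w.getVert_mem_support t)
    exact mem_support_of_mem_edges (hsub he) hte
  set f : ℕ → ℕ := fun t => p.support.idxOf (w.getVert t)
  have hf_le (t : ℕ) : f t ≤ p.length := by
    have := List.idxOf_lt_length_iff.2 (hmem t)
    rw [length_support] at this
    exact Nat.lt_succ_iff.1 this
  have hpf (t : ℕ) : p.getVert (f t) = w.getVert t := getVert_support_idxOf _ (hmem t)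
  have hw_edge {t : ℕ} (ht : t < w.length) : s(w.getVert t, w.getVert (t + 1)) ∈ w.edges :=
    w.mk_mem_edges_iff_exists.2 ⟨t, ht, rfl⟩
  have hstep (t : ℕ) (ht : t < w.length) : f (t + 1) = f t + 1 ∨ f t = f (t + 1) + 1 := by
    have h := hsub (hw_edge ht)
    rw [← hpf, ← hpf] at h
    exact hp.eq_add_one_or_eq_add_one_of_mk_mem_edges (hf_le _) (hf_le _) h
  have hinj : Set.InjOn f (Set.Iic w.length) := fun t ht t' ht' h =>
    hw.getVert_injOn ht ht' (by rw [← hpf, ← hpf]; exact congrArg p.getVert h)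
  rcases Nat.eq_add_or_add_eq_of_injOn_of_step f _ hstep hinj with hinc | hdec
  · refine ⟨f 0, by have := hinc _ le_rfl; have := hf_le w.length; omega, fun i hi => ?_⟩
    obtain ⟨t, rfl⟩ : ∃ t, i = f 0 + t := ⟨i - f 0, by simp at hi; omega⟩
    have ht : t < w.length := by simp at hi; omega
    have hsucc : f t + 1 = f (t + 1) := by have := hinc t ht.le; have := hinc (t + 1) ht; omega
    rw [← hinc t ht.le, hsucc, hpf, hpf]
    exact hw_edge ht
  · refine ⟨f w.length, by have := hdec _ le_rfl; have := hf_le 0; omega, fun i hi => ?_⟩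
    have hK := hdec _ le_rfl
    obtain ⟨t, ht, hit⟩ : ∃ t < w.length, i + 1 = f 0 - t :=
      ⟨f 0 - i - 1, by simp at hi; omega, by simp at hi; omega⟩
    have h0 := hdec t ht.le
    have h1 := hdec (t + 1) ht
    rw [show i = f (t + 1) by omega, show f (t + 1) + 1 = f t by omega, hpf, hpf, Sym2.eq_swap]
    exact hw_edge ht

end SimpleGraph.Walk

namespace HamPath

variable {n k : ℕ}

/-- Positions `i` of the edges `s(v_i, v_{i+1})` of a Hamiltonian path `v_0 … v_{n-1}` that end a
block of `k` consecutive edges. -/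
def cutIndices (k n : ℕ) : Finset ℕ := {i ∈ range (n - 1) | i % k = k - 1}

theorem card_cutIndices_le (hk : 0 < k) : #(cutIndices k n) ≤ n / k := by
  calc #(cutIndices k n) ≤ #(range (n / k)) := by
        refine card_le_card_of_injOn (· / k) (fun i hi => ?_) fun i hi j hj hij => ?_
        · simp only [cutIndices, mem_coe, mem_filter, mem_range] at hi ⊢
          have := Nat.div_add_mod i k
          rw [← Nat.add_one_le_iff, Nat.le_div_iff_mul_le hk, add_mul, one_mul, mul_comm]
          omega
        · simp only [cutIndices, mem_coe, mem_filter, mem_range] at hi hj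
          rw [← Nat.div_add_mod i k, ← Nat.div_add_mod j k, hi.2, hj.2]
          exact congrArg (k * · + (k - 1)) hij
    _ = n / k := card_range _

variable (P : HamPath n)

theorem isPath : P.walk.IsPath := P.isHamiltonian.isPath

theorem length_walk : P.walk.length = n - 1 := by
  simpa using P.isHamiltonian.length_eq

theorem eq_of_getVert_eq {i j : ℕ} (hi : i < n) (hj : j < n)
    (h : P.walk.getVert i = P.walk.getVert j) : i = j :=
  P.isPath.getVert_injOn (by simp [length_walk]; omega) (by simp [length_walk]; omega) h

/-- Junk value at the last vertex. -/
def next (v : Fin n) : Fin n := P.walk.getVert (P.walk.support.idxOf v + 1)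

theorem next_getVert {i : ℕ} (hi : i < n) :
    P.next (P.walk.getVert i) = P.walk.getVert (i + 1) := by
  have hmem := P.walk.getVert_mem_support i
  have hlt := List.idxOf_lt_length_iff.2 hmem
  rw [P.isHamiltonian.length_support, Fintype.card_fin] at hlt
  rw [next, P.eq_of_getVert_eq hlt hi (P.walk.getVert_support_idxOf hmem)]

def cutEdges (k : ℕ) : Finset (Sym2 (Fin n)) :=
  (cutIndices k n).image fun i => s(P.walk.getVert i, P.walk.getVert (i + 1))

def cutLeft (k : ℕ) : Finset (Fin n) := (cutIndices k n).image P.walk.getVert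

def cutRight (k : ℕ) : Finset (Fin n) := (cutIndices k n).image fun i => P.walk.getVert (i + 1)

def label (k : ℕ) (v : Fin n) : Fin 3 :=
  if v ∈ P.cutLeft k then 1 else if v ∈ P.cutRight k then 2 else 0

theorem add_one_lt_of_mem_cutIndices {i : ℕ} (hi : i ∈ cutIndices k n) : i + 1 < n := by
  simp only [cutIndices, mem_filter, mem_range] at hi
  omega

theorem mem_edges_of_mem_cutEdges {e : Sym2 (Fin n)} (he : e ∈ P.cutEdges k) :
    e ∈ P.walk.edges := by
  obtain ⟨i, hi, rfl⟩ := mem_image.1 he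
  have := add_one_lt_of_mem_cutIndices hi
  exact P.walk.mk_mem_edges_iff_exists.2 ⟨i, by rw [length_walk]; omega, rfl⟩

theorem exists_mem_cutEdges_of_edges_subset (hk : 0 < k) {x y : Fin n}
    {w : (⊤ : SimpleGraph (Fin n)).Walk x y} (hw : w.IsPath) (hlen : w.length = k)
    (hsub : w.edges ⊆ P.walk.edges) : ∃ e ∈ P.cutEdges k, e ∈ w.edges := by
  obtain ⟨a, ha, hwin⟩ := P.isPath.exists_consecutive_of_edges_subset hw hsub
  rw [hlen, length_walk] at ha
  rw [hlen] at hwin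
  -- the last position of the block of `k` edges that contains position `a`
  have hmod : (k * (a / k) + (k - 1)) % k = k - 1 := by
    rw [Nat.mul_add_mod, Nat.mod_eq_of_lt (by omega)]
  have hwindow : k * (a / k) + (k - 1) ∈ Set.Ico a (a + k) := by
    have := Nat.div_add_mod a k; have := Nat.mod_lt a hk
    constructor <;> omega
  refine ⟨_, mem_image.2 ⟨_, ?_, rfl⟩, hwin _ hwindow⟩
  simp only [cutIndices, mem_filter, mem_range]
  exact ⟨by simp only [Set.mem_Ico] at hwindow; omega, hmod⟩

theorem cutEdges_ne_of_sepHam (hk : 0 < k) {P Q : HamPath n} (h : SepHam k P Q) :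
    P.cutEdges k ≠ Q.cutEdges k := by
  intro heq
  obtain ⟨x, y, w, hw, hlen, ⟨hP, hQ⟩ | ⟨hQ, hP⟩⟩ := h
  · obtain ⟨e, he, hew⟩ := P.exists_mem_cutEdges_of_edges_subset hk hw hlen hP
    exact hQ e hew (Q.mem_edges_of_mem_cutEdges (heq ▸ he))
  · obtain ⟨e, he, hew⟩ := Q.exists_mem_cutEdges_of_edges_subset hk hw hlen hQ
    exact hP e hew (P.mem_edges_of_mem_cutEdges (heq ▸ he))

theorem cutEdges_eq_image_next :
    P.cutEdges k = (P.cutLeft k).image fun v => s(v, P.next v) := by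
  rw [cutLeft, image_image]
  refine image_congr fun i hi => ?_
  have hi' := Nat.lt_of_succ_lt (add_one_lt_of_mem_cutIndices hi)
  simp only [Function.comp_apply, P.next_getVert hi']

theorem next_mem_cutRight {v : Fin n} (hv : v ∈ P.cutLeft k) : P.next v ∈ P.cutRight k := by
  obtain ⟨i, hi, rfl⟩ := mem_image.1 hv
  rw [P.next_getVert (Nat.lt_of_succ_lt (add_one_lt_of_mem_cutIndices hi))]
  exact mem_image_of_mem _ hi

theorem injOn_next : Set.InjOn P.next (P.cutLeft k) := by
  rintro _ hv _ hw h
  obtain ⟨i, hi, rfl⟩ := mem_image.1 (mem_coe.1 hv)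
  obtain ⟨j, hj, rfl⟩ := mem_image.1 (mem_coe.1 hw)
  have hi' := add_one_lt_of_mem_cutIndices hi
  have hj' := add_one_lt_of_mem_cutIndices hj
  rw [P.next_getVert (Nat.lt_of_succ_lt hi'), P.next_getVert (Nat.lt_of_succ_lt hj')] at h
  rw [Nat.add_right_cancel (P.eq_of_getVert_eq hi' hj' h)]

theorem disjoint_cutLeft_cutRight (hk : 2 ≤ k) : Disjoint (P.cutLeft k) (P.cutRight k) := by
  rw [Finset.disjoint_left]
  intro v hl hr
  obtain ⟨i, hi, rfl⟩ := mem_image.1 hl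
  obtain ⟨j, hj, hji⟩ := mem_image.1 hr
  have hi' := add_one_lt_of_mem_cutIndices hi
  have hj' := add_one_lt_of_mem_cutIndices hj
  simp only [cutIndices, mem_filter] at hi hj
  -- `j + 1 = i` would be both `≡ 0` and `≡ k - 1 (mod k)`.
  have h := hi.2
  rw [← P.eq_of_getVert_eq hj' (by omega) hji, Nat.add_mod, hj.2,
    Nat.mod_eq_of_lt (show 1 < k by omega), Nat.sub_add_cancel (by omega), Nat.mod_self] at h
  omega

theorem label_eq_one_iff {v : Fin n} : P.label k v = 1 ↔ v ∈ P.cutLeft k := by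
  unfold label
  split_ifs <;> simp_all

theorem label_eq_two_iff (hk : 2 ≤ k) {v : Fin n} : P.label k v = 2 ↔ v ∈ P.cutRight k := by
  have : v ∈ P.cutLeft k → v ∉ P.cutRight k :=
    fun h => Finset.disjoint_left.1 (P.disjoint_cutLeft_cutRight hk) h
  unfold label
  split_ifs <;> simp_all

theorem cutLeft_eq_of_label_eq {P Q : HamPath n} (h : P.label k = Q.label k) :
    P.cutLeft k = Q.cutLeft k := by
  ext v
  rw [← label_eq_one_iff, h, label_eq_one_iff]

theorem cutRight_eq_of_label_eq (hk : 2 ≤ k) {P Q : HamPath n} (h : P.label k = Q.label k) :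
    P.cutRight k = Q.cutRight k := by
  ext v
  rw [← label_eq_two_iff _ hk, h, label_eq_two_iff _ hk]

theorem ncard_label_fiber_le (hk : 2 ≤ k) {S : Set (HamPath n)}
    (hS : S.InjOn (cutEdges · k)) (P₀ : HamPath n) :
    {P ∈ S | P.label k = P₀.label k}.ncard ≤ (n / k)! := by
  calc _ ≤ {g : P₀.cutLeft k → Fin n |
        Injective g ∧ ∀ a, g a ∈ P₀.cutRight k}.ncard := by
        refine Set.ncard_le_ncard_of_injOn (fun P a => P.next a) ?_ ?_ (Set.toFinite _)
        · rintro P ⟨-, hP⟩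
          have hL (a : P₀.cutLeft k) : (a : Fin n) ∈ P.cutLeft k := by
            rw [cutLeft_eq_of_label_eq hP]; exact a.2
          refine ⟨fun a b hab => Subtype.ext (P.injOn_next (hL a) (hL b) hab), fun a => ?_⟩
          rw [← cutRight_eq_of_label_eq hk hP]
          exact P.next_mem_cutRight (hL a)
        · rintro P ⟨hPS, hP⟩ Q ⟨hQS, hQ⟩ h
          refine hS hPS hQS ?_
          simp only [cutEdges_eq_image_next, cutLeft_eq_of_label_eq hP,
            cutLeft_eq_of_label_eq hQ]
          exact image_congr fun v hv => congrArg (s(v, ·)) (congr_fun h ⟨v, hv⟩)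
    _ ≤ (#(P₀.cutRight k)).descFactorial #(P₀.cutLeft k) := by
        simpa using Set.ncard_setOf_injective_mem_le (α := P₀.cutLeft k) (P₀.cutRight k)
    _ ≤ (#(P₀.cutRight k))! := Nat.descFactorial_le_factorial _ _
    _ ≤ (n / k)! := Nat.factorial_le (card_image_le.trans (card_cutIndices_le (by omega)))

end HamPath

theorem hamPath_separated_upper_bound_odd_general (k n : ℕ) (hk : 3 ≤ k)
    (F : Set (HamPath n))
    (hF : ∀ P ∈ F, ∀ Q ∈ F, P ≠ Q → SepHam k P Q) :
    F.ncard ≤ 3 ^ n * (n / k).factorial := by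
  have hinj : F.InjOn (HamPath.cutEdges · k) := fun P hP Q hQ h => by
    by_contra hne
    exact HamPath.cutEdges_ne_of_sepHam (by omega) (hF P hP Q hQ hne) h
  calc F.ncard ≤ Fintype.card (Fin n → Fin 3) * (n / k)! :=
        Set.ncard_le_card_mul_of_ncard_fiber_le (·.label k) _
          fun P₀ _ => HamPath.ncard_label_fiber_le (by omega) hinj P₀
    _ = 3 ^ n * (n / k).factorial := by simp

/-- **Theorem 3, upper bound.** For every odd `k ≥ 3` and every positive multiple `n`
of `k`, every family `F` of Hamiltonian paths in `K_n` any two distinct members of which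
are `k`-separated satisfies `|F| ≤ 3 ^ n * (n/k)!`. -/
theorem hamPath_separated_upper_bound_odd (k n : ℕ) (hk : 3 ≤ k) (hko : Odd k)
    (hn : 0 < n) (hkn : k ∣ n) (F : Set (HamPath n))
    (hF : ∀ P ∈ F, ∀ Q ∈ F, P ≠ Q → SepHam k P Q) :
    F.ncard ≤ 3 ^ n * (n / k).factorial :=
  hamPath_separated_upper_bound_odd_general k n hk F hF
end

section
/- Let n be an even positive integer and let P and Q be two Hamiltonian paths in the complete graph on the vertex set {1,...,n} whose edge sets contain a common perfect matching M. Then there is no path of 2 edges which is a subpath of one of P, Q and shares no edge with the other. -/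
open SimpleGraph

/-- `M` is a perfect matching of the complete graph on `Fin n`, viewed as a set of
edges: every edge is a genuine (non-loop) edge, and every vertex lies in exactly one
edge of `M`. -/
def IsPerfectMatchingOn (n : ℕ) (M : Set (Sym2 (Fin n))) : Prop :=
  (∀ e ∈ M, ¬ e.IsDiag) ∧ (∀ v : Fin n, ∃! e, e ∈ M ∧ v ∈ e)

/-! A path has at most two edges at any vertex, so if its edges include an edge at every
vertex, then of any two consecutive edges of the path one is such an edge. A common
perfect matching `M` of `P` and `Q` therefore meets every 2-edge subpath of `P` or `Q`
in an edge lying on both paths. -/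

namespace SimpleGraph.Walk

variable {V : Type*} {G : SimpleGraph V}

lemma exists_edges_eq_of_length_eq_two {a b : V} (w : G.Walk a b) (hw : w.length = 2) :
    ∃ c, w.edges = [s(a, c), s(c, b)] := by
  match w, hw with
  | cons _ (cons _ nil), _ => exact ⟨_, rfl⟩

variable [DecidableEq V]

lemma countP_mem_edges_eq_zero_of_notMem_support {u v c : V} (p : G.Walk u v)
    (hc : c ∉ p.support) : p.edges.countP (c ∈ ·) = 0 :=
  List.countP_eq_zero.2 fun _ he hce => hc (mem_support_of_mem_edges he (by simpa using hce))

lemma IsPath.countP_start_mem_edges_le_one {u v : V} {p : G.Walk u v} (hp : p.IsPath) :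
    p.edges.countP (u ∈ ·) ≤ 1 := by
  cases p with
  | nil => simp
  | cons _ q =>
    rw [cons_isPath_iff] at hp
    rw [edges_cons, List.countP_cons, countP_mem_edges_eq_zero_of_notMem_support q hp.2]
    split <;> simp

lemma IsPath.countP_mem_edges_le_two {u v : V} {p : G.Walk u v} (hp : p.IsPath) (c : V) :
    p.edges.countP (c ∈ ·) ≤ 2 := by
  induction p with
  | nil => simp
  | @cons a b _ _ q ih =>
    rw [cons_isPath_iff] at hp
    rw [edges_cons, List.countP_cons]
    by_cases hc : c ∈ s(a, b)
    · rcases Sym2.mem_iff.mp hc with rfl | rfl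
      · simp [countP_mem_edges_eq_zero_of_notMem_support q hp.2]
      · have := hp.1.countP_start_mem_edges_le_one
        simp only [hc, decide_true, if_true]
        omega
    · simpa [hc] using ih hp.1

lemma IsPath.eq_or_eq_of_mem_edges {u v c : V} {p : G.Walk u v} (hp : p.IsPath)
    {e f₁ f₂ : Sym2 V} (he : e ∈ p.edges) (hf₁ : f₁ ∈ p.edges) (hf₂ : f₂ ∈ p.edges)
    (hce : c ∈ e) (hcf₁ : c ∈ f₁) (hcf₂ : c ∈ f₂) (hf : f₁ ≠ f₂) : e = f₁ ∨ e = f₂ := by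
  by_contra! hne
  have hsub : ({e, f₁, f₂} : Finset (Sym2 V)) ⊆ (p.edges.filter (c ∈ ·)).toFinset := by
    intro g hg
    simp only [Finset.mem_insert, Finset.mem_singleton] at hg
    rcases hg with rfl | rfl | rfl <;> simp [*]
  have hcard := Finset.card_le_card hsub
  rw [Finset.card_insert_of_notMem (by simp [hne.1, hne.2]),
    Finset.card_pair hf, List.toFinset_card_of_nodup (hp.isTrail.edges_nodup.filter _),
    ← List.countP_eq_length_filter] at hcard
  have := hp.countP_mem_edges_le_two c
  omega

theorem IsPath.exists_mem_edges_mem_of_length_eq_two {M : Set (Sym2 V)}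
    (hM : ∀ c, ∃ e ∈ M, c ∈ e) {u v : V} {p : G.Walk u v} (hp : p.IsPath)
    (hMp : ∀ e ∈ M, e ∈ p.edges) {a b : V} {w : G.Walk a b} (hw : w.IsPath)
    (hlen : w.length = 2) (hwp : ∀ e ∈ w.edges, e ∈ p.edges) : ∃ e ∈ w.edges, e ∈ M := by
  obtain ⟨c, hedges⟩ := w.exists_edges_eq_of_length_eq_two hlen
  have hne : s(a, c) ≠ s(c, b) := by
    simpa [hedges] using hw.isTrail.edges_nodup
  obtain ⟨e, heM, hce⟩ := hM c
  have hac : s(a, c) ∈ p.edges := hwp _ (by simp [hedges])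
  have hcb : s(c, b) ∈ p.edges := hwp _ (by simp [hedges])
  refine ⟨e, ?_, heM⟩
  rcases hp.eq_or_eq_of_mem_edges (hMp e heM) hac hcb hce (Sym2.mem_mk_right a c)
    (Sym2.mem_mk_left c b) hne with rfl | rfl <;> simp [hedges]

end SimpleGraph.Walk

theorem no_two_separation_of_common_perfectMatching_general (n : ℕ)
    {u v x y : Fin n}
    (P : (⊤ : SimpleGraph (Fin n)).Walk u v) (Q : (⊤ : SimpleGraph (Fin n)).Walk x y)
    (hP : P.IsHamiltonian) (hQ : Q.IsHamiltonian)
    (M : Set (Sym2 (Fin n))) (hM : IsPerfectMatchingOn n M)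
    (hMP : ∀ e ∈ M, e ∈ P.edges) (hMQ : ∀ e ∈ M, e ∈ Q.edges) :
    ¬ ∃ (a b : Fin n) (w : (⊤ : SimpleGraph (Fin n)).Walk a b),
        w.IsPath ∧ w.length = 2 ∧
        (((∀ e ∈ w.edges, e ∈ P.edges) ∧ (∀ e ∈ w.edges, e ∉ Q.edges)) ∨
         ((∀ e ∈ w.edges, e ∈ Q.edges) ∧ (∀ e ∈ w.edges, e ∉ P.edges))) := by
  have hcover : ∀ c, ∃ e ∈ M, c ∈ e := fun c => (hM.2 c).exists
  rintro ⟨a, b, w, hw, hlen, ⟨hwP, hwQ⟩ | ⟨hwQ, hwP⟩⟩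
  · obtain ⟨e, hew, heM⟩ := hP.isPath.exists_mem_edges_mem_of_length_eq_two hcover hMP hw hlen hwP
    exact hwQ e hew (hMQ e heM)
  · obtain ⟨e, hew, heM⟩ := hQ.isPath.exists_mem_edges_mem_of_length_eq_two hcover hMQ hw hlen hwQ
    exact hwP e hew (hMP e heM)

/-- **Paths sharing a perfect matching are not 2-separated.** For even `n > 0`, if the
edge sets of two Hamiltonian paths `P`, `Q` of `K_n` both contain a perfect matching
`M`, then there is no path of `2` edges which is a subpath of one of `P`, `Q` (i.e. all
of whose edges are edges of it) and shares no edge with the other. -/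
theorem no_two_separation_of_common_perfectMatching (n : ℕ) (hn : 0 < n) (hne : Even n)
    {u v x y : Fin n}
    (P : (⊤ : SimpleGraph (Fin n)).Walk u v) (Q : (⊤ : SimpleGraph (Fin n)).Walk x y)
    (hP : P.IsHamiltonian) (hQ : Q.IsHamiltonian)
    (M : Set (Sym2 (Fin n))) (hM : IsPerfectMatchingOn n M)
    (hMP : ∀ e ∈ M, e ∈ P.edges) (hMQ : ∀ e ∈ M, e ∈ Q.edges) :
    ¬ ∃ (a b : Fin n) (w : (⊤ : SimpleGraph (Fin n)).Walk a b),
        w.IsPath ∧ w.length = 2 ∧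
        (((∀ e ∈ w.edges, e ∈ P.edges) ∧ (∀ e ∈ w.edges, e ∉ Q.edges)) ∨
         ((∀ e ∈ w.edges, e ∈ Q.edges) ∧ (∀ e ∈ w.edges, e ∉ P.edges))) :=
  no_two_separation_of_common_perfectMatching_general n P Q hP hQ M hM hMP hMQ
end

section
/- For all sufficiently large n, there exists a family of at least 2^n/n^6 subsets of {1,...,n} such that for any two distinct subsets S, T in the family, one of them contains at least 3 elements not belonging to the other; consequently there is a family of at least 2^n/n^6 induced subgraphs of the complete graph K_n such that for any two of them there is a triangle contained in exactly one of the two graphs and edge-disjoint from the other. -/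
/-!
Take a maximal family of subsets of `{1,…,n}` whose pairwise symmetric differences have at
least `5` elements. By maximality the balls of radius `4` around its members cover all `2^n`
subsets, and `T ↦ S ∆ T` embeds the ball around `S` into the subsets of size at most `4`, of
which there are `∑_{i ≤ 4} C(n, i) ≤ (n + 1)^4 ≤ n^6`. Two members `S ≠ T` satisfy
`|S \ T| + |T \ S| ≥ 5`, so one side, say `S \ T`, has three elements; they span a triangle of
the graph induced by `S` none of whose edges lies in the graph induced by `T`.
-/

open SimpleGraph

/-- The subgraph of the complete graph `K_n` induced by a set `S` of vertices, viewed as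
a graph on the full vertex set `Fin n`: two vertices are adjacent iff they are distinct
and both belong to `S`. -/
def inducedOn {n : ℕ} (S : Set (Fin n)) : SimpleGraph (Fin n) where
  Adj x y := x ≠ y ∧ x ∈ S ∧ y ∈ S
  symm := by
    constructor
    intro x y h
    exact ⟨h.1.symm, h.2.2, h.2.1⟩
  loopless := by
    constructor
    intro x h
    exact h.1 rfl

open Finset
open scoped symmDiff

theorem Nat.sum_range_choose_le_succ_pow (n k : ℕ) :
    ∑ i ∈ range (k + 1), n.choose i ≤ (n + 1) ^ k := by
  rw [add_pow]
  refine sum_le_sum fun i hi => ?_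
  calc n.choose i ≤ n ^ i := Nat.choose_le_pow n i
    _ ≤ n ^ i * 1 ^ (k - i) * k.choose i := by
      rw [one_pow, mul_one]
      exact Nat.le_mul_of_pos_right _ (Nat.choose_pos (Nat.lt_succ_iff.mp (mem_range.mp hi)))

section

variable {α : Type*} [Fintype α]

theorem exists_pairwise_not_rel_and_card_le_card_mul [DecidableEq α] (R : α → α → Prop)
    [DecidableRel R] (hrefl : ∀ x, R x x) (hsymm : ∀ x y, R x y → R y x) (B : ℕ)
    (hball : ∀ x, #{y | R x y} ≤ B) :
    ∃ F : Finset α, (F : Set α).Pairwise (fun x y => ¬ R x y) ∧ Fintype.card α ≤ #F * B := by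
  obtain ⟨F, hF, hmax⟩ := exists_max_image {F : Finset α | (F : Set α).Pairwise (¬ R · ·)}
    card ⟨∅, by simp⟩
  rw [mem_filter] at hF
  refine ⟨F, hF.2, ?_⟩
  have hcover : ∀ y, ∃ x ∈ F, R x y := by
    by_contra! ⟨y, hy⟩
    have hyF : y ∉ F := fun h => hy y h (hrefl y)
    have hins : ((insert y F : Finset α) : Set α).Pairwise (¬ R · ·) := by
      rw [coe_insert, Set.pairwise_insert]
      exact ⟨hF.2, fun x hx _ => ⟨fun h => hy x hx (hsymm _ _ h), hy x hx⟩⟩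
    have := hmax _ (mem_filter.2 ⟨mem_univ _, hins⟩)
    rw [card_insert_of_notMem hyF] at this
    omega
  calc Fintype.card α = #(univ : Finset α) := card_univ.symm
    _ ≤ #(F.biUnion fun x => {y | R x y}) := card_le_card fun y _ => by simpa using hcover y
    _ ≤ #F * B := card_biUnion_le_card_mul _ _ _ fun x _ => hball x

theorem card_filter_card_le_le_succ_pow (k : ℕ) :
    #{s : Finset α | #s ≤ k} ≤ (Fintype.card α + 1) ^ k := by
  classical
  calc #{s : Finset α | #s ≤ k}
      ≤ #((range (k + 1)).biUnion fun i => powersetCard i (univ : Finset α)) :=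
        card_le_card fun s hs => by simpa [Nat.lt_succ_iff] using hs
    _ ≤ ∑ i ∈ range (k + 1), #(powersetCard i (univ : Finset α)) := card_biUnion_le
    _ ≤ (Fintype.card α + 1) ^ k := by
      simpa only [card_powersetCard, card_univ] using Nat.sum_range_choose_le_succ_pow _ k

theorem card_filter_card_symmDiff_le_le_succ_pow [DecidableEq α]
    (S : Finset α) (k : ℕ) : #{T | #(S ∆ T) ≤ k} ≤ (Fintype.card α + 1) ^ k :=
  (card_le_card_of_injOn (S ∆ ·) (fun T hT => by simpa using hT)
    (symmDiff_right_injective S).injOn).trans (card_filter_card_le_le_succ_pow k)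

theorem exists_family_lt_card_symmDiff [DecidableEq α] (r : ℕ) :
    ∃ F : Finset (Finset α), (F : Set (Finset α)).Pairwise (fun S T => r < #(S ∆ T)) ∧
      2 ^ Fintype.card α ≤ #F * (Fintype.card α + 1) ^ r := by
  obtain ⟨F, hF, hcard⟩ := exists_pairwise_not_rel_and_card_le_card_mul
    (fun S T : Finset α => #(S ∆ T) ≤ r) (fun S => by simp) (fun S T h => by rwa [symmDiff_comm])
    _ (card_filter_card_symmDiff_le_le_succ_pow · r)
  exact ⟨F, hF.mono' fun S T h => not_le.mp h, by simpa [Fintype.card_finset] using hcard⟩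

end

theorem three_le_card_sdiff_or_of_four_lt_card_symmDiff {α : Type*} [DecidableEq α]
    {S T : Finset α} (h : 4 < #(S ∆ T)) : 3 ≤ #(S \ T) ∨ 3 ≤ #(T \ S) := by
  rw [Finset.symmDiff_def, card_union_of_disjoint disjoint_sdiff_sdiff] at h
  omega

theorem exists_triangle_inducedOn_of_three_le_card_sdiff {n : ℕ} {S T : Finset (Fin n)}
    (h : 3 ≤ #(S \ T)) :
    ∃ a b c : Fin n, a ≠ b ∧ b ≠ c ∧ a ≠ c ∧
      (inducedOn (S : Set (Fin n))).Adj a b ∧ (inducedOn (S : Set (Fin n))).Adj b c ∧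
      (inducedOn (S : Set (Fin n))).Adj a c ∧ ¬ (inducedOn (T : Set (Fin n))).Adj a b ∧
      ¬ (inducedOn (T : Set (Fin n))).Adj b c ∧ ¬ (inducedOn (T : Set (Fin n))).Adj a c := by
  obtain ⟨u, hu, hcard⟩ := exists_subset_card_eq h
  obtain ⟨a, b, c, hab, hac, hbc, rfl⟩ := card_eq_three.mp hcard
  simp only [insert_subset_iff, singleton_subset_iff, mem_sdiff] at hu
  obtain ⟨⟨haS, haT⟩, ⟨hbS, hbT⟩, hcS, -⟩ := hu
  exact ⟨a, b, c, hab, hbc, hac, ⟨hab, haS, hbS⟩, ⟨hbc, hbS, hcS⟩, ⟨hac, haS, hcS⟩,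
    fun h => haT h.2.1, fun h => hbT h.2.1, fun h => haT h.2.1⟩

theorem inducedOn_ne_of_three_le_card_sdiff {n : ℕ} {S T : Finset (Fin n)}
    (h : 3 ≤ #(S \ T)) : inducedOn (S : Set (Fin n)) ≠ inducedOn (T : Set (Fin n)) := by
  obtain ⟨a, b, -, -, -, -, hS, -, -, hT, -⟩ := exists_triangle_inducedOn_of_three_le_card_sdiff h
  exact fun hST => hT (hST ▸ hS)

theorem two_pow_div_pow_six_le {n m : ℕ} (hn : 4 ≤ n) (h : 2 ^ n ≤ m * (n + 1) ^ 4) :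
    (2 : ℝ) ^ n / (n : ℝ) ^ 6 ≤ m := by
  have hpow : (n + 1) ^ 4 ≤ n ^ 6 :=
    calc (n + 1) ^ 4 ≤ (2 * n) ^ 4 := by gcongr; omega
      _ = 4 ^ 2 * n ^ 4 := by ring
      _ ≤ n ^ 2 * n ^ 4 := by gcongr
      _ = n ^ 6 := by ring
  rw [div_le_iff₀ (pow_pos (by exact_mod_cast (by omega : 0 < n)) 6)]
  exact_mod_cast h.trans (Nat.mul_le_mul_left m hpow)

/-- **Gilbert–Varshamov construction for `D(n,3)`.** For all sufficiently large `n`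
there is a family of at least `2^n / n^6` subsets of `{1,…,n}` any two distinct members
of which differ in at least `3` elements on one side; consequently there is a family of
at least `2^n / n^6` induced subgraphs of `K_n` such that for any two of them there is a
triangle contained in exactly one of the two graphs and edge-disjoint from the other. -/
theorem gilbert_varshamov_triangle_family :
    ∃ N : ℕ, ∀ n : ℕ, N ≤ n →
      (∃ F : Set (Finset (Fin n)),
        (2 : ℝ) ^ n / (n : ℝ) ^ 6 ≤ (F.ncard : ℝ) ∧
        ∀ S ∈ F, ∀ T ∈ F, S ≠ T → 3 ≤ (S \ T).card ∨ 3 ≤ (T \ S).card) ∧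
      (∃ 𝒢 : Set (SimpleGraph (Fin n)),
        (2 : ℝ) ^ n / (n : ℝ) ^ 6 ≤ (𝒢.ncard : ℝ) ∧
        (∀ G ∈ 𝒢, ∃ S : Set (Fin n), G = inducedOn S) ∧
        ∀ G ∈ 𝒢, ∀ H ∈ 𝒢, G ≠ H →
          ∃ a b c : Fin n, a ≠ b ∧ b ≠ c ∧ a ≠ c ∧
            ((G.Adj a b ∧ G.Adj b c ∧ G.Adj a c ∧
                ¬ H.Adj a b ∧ ¬ H.Adj b c ∧ ¬ H.Adj a c) ∨
             (H.Adj a b ∧ H.Adj b c ∧ H.Adj a c ∧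
                ¬ G.Adj a b ∧ ¬ G.Adj b c ∧ ¬ G.Adj a c))) := by
  refine ⟨4, fun n hn => ?_⟩
  obtain ⟨F, hsep, hcard⟩ := exists_family_lt_card_symmDiff (α := Fin n) 4
  rw [Fintype.card_fin] at hcard
  have hsize := two_pow_div_pow_six_le hn hcard
  have hside : (F : Set (Finset (Fin n))).Pairwise fun S T => 3 ≤ #(S \ T) ∨ 3 ≤ #(T \ S) :=
    hsep.mono' fun _ _ => three_le_card_sdiff_or_of_four_lt_card_symmDiff
  set f := fun S : Finset (Fin n) => inducedOn (S : Set (Fin n))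
  have hinj : Set.InjOn f F :=
    fun S hS T hT hST => by_contra fun hne => (hside hS hT hne).elim
      (inducedOn_ne_of_three_le_card_sdiff · hST) (inducedOn_ne_of_three_le_card_sdiff · hST.symm)
  refine ⟨⟨F, by rwa [Set.ncard_coe_finset], hside⟩,
    ⟨f '' F, by rwa [hinj.ncard_image, Set.ncard_coe_finset], fun _ ⟨S, _, hG⟩ => ⟨S, hG.symm⟩, ?_⟩⟩
  rintro _ ⟨S, hS, rfl⟩ _ ⟨T, hT, rfl⟩ hne
  rcases hside hS hT (ne_of_apply_ne _ hne) with h | h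
  · obtain ⟨a, b, c, hab, hbc, hac, htri⟩ := exists_triangle_inducedOn_of_three_le_card_sdiff h
    exact ⟨a, b, c, hab, hbc, hac, Or.inl htri⟩
  · obtain ⟨a, b, c, hab, hbc, hac, htri⟩ := exists_triangle_inducedOn_of_three_le_card_sdiff h
    exact ⟨a, b, c, hab, hbc, hac, Or.inr htri⟩
end
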